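/- arXiv:2505.01705 — 5 statements merged into one kernel-verified Lean document; each statement's English description precedes it below -/
import Mathlib

section
/- Let G(z) = z^{-1} + Σ_{n≥1} m_n z^{-n-1} and K(z) = z^{-1} + Σ_{n≥1} r_n z^{n-1} be formal Laurent series. Then the functional relation K(G(z)) = z holds (at the level of formal power series) if and only if for every n ≥ 1 the free moment-cumulant formula m_n = Σ_{π ∈ NC(n)} Π_{V ∈ π} r_{|V|} holds. -/
/-!
With `M = Mser m` and `w = 1/z`, the relation `K(G(z)) = z` is the fixed-point equation
`M = 1 + R̂(w M)`, whose solution is unique: the coefficient of `wⁿ` on the right only involves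
coefficients of `M` below `n`. So it suffices to show that the series of noncrossing-partition
sums `∑_{π ∈ NC(n)} r_π` solves it. Sorting partitions by the size `k` of the block containing
the first point, this reduces to the statement that `[wⁿ] (w M)ᵏ` is the sum, over `π ∈ NC(n)`
whose first block has exactly `k` elements, of the product of `r` over the other blocks. That
follows by induction on `k` from cutting `π` at the second point `s` of its first block: the
points strictly between the first point and `s` carry an arbitrary noncrossing partition, and
the points from `s` on carry one whose first block is the old one with the first point removed;
conversely any such pair glues back to a noncrossing partition.
-/

open Finset PowerSeries

/-- `P` is (the set of blocks of) a set partition of `{0, …, n-1}`. -/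
def IsSetPartition (n : ℕ) (P : Finset (Finset (Fin n))) : Prop :=
  (∀ B ∈ P, B.Nonempty) ∧ ∀ x : Fin n, ∃! B, B ∈ P ∧ x ∈ B

/-- `P` is non-crossing: there are no `a < b < c < d` with `a, c` in one block and
`b, d` in a different block. -/
def IsNonCrossing (n : ℕ) (P : Finset (Finset (Fin n))) : Prop :=
  ∀ a b c d : Fin n, a < b → b < c → c < d →
    ∀ B₁ ∈ P, ∀ B₂ ∈ P, a ∈ B₁ → c ∈ B₁ → b ∈ B₂ → d ∈ B₂ → B₁ = B₂

open scoped Classical in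
/-- The set `NC(n)` of non-crossing partitions of `{1, …, n}`. -/
noncomputable def NC (n : ℕ) : Finset (Finset (Finset (Fin n))) :=
  Finset.univ.filter fun P => IsSetPartition n P ∧ IsNonCrossing n P

/-- Composition (substitution) of formal power series, `f ∘ a`; the defining coefficient
formula is the correct one when `a` has zero constant term (the only case used below). -/
noncomputable def psComp (f a : PowerSeries ℝ) : PowerSeries ℝ :=
  PowerSeries.mk fun n => ∑ k ∈ Finset.range (n + 1), (coeff k f) * (coeff n (a ^ k))

/-- `M(w) = 1 + ∑_{n≥1} m_n wⁿ`, so that `G(z) = w·M(w)` with `w = 1/z` encodes the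
formal Laurent series `G(z) = z⁻¹ + ∑_{n≥1} m_n z^{-n-1}`. -/
noncomputable def Mser (m : ℕ → ℝ) : PowerSeries ℝ :=
  PowerSeries.mk fun k => if k = 0 then 1 else m k

/-- `R̂(y) = ∑_{n≥1} r_n yⁿ = y·R(y)`, encoding `K(z) = z⁻¹ + ∑_{n≥1} r_n z^{n-1}`. -/
noncomputable def Rser (r : ℕ → ℝ) : PowerSeries ℝ :=
  PowerSeries.mk fun k => if k = 0 then 0 else r k

section Partitions

variable {α β : Type*} [LinearOrder α] [LinearOrder β]

structure IsNCPartition (S : Finset α) (Q : Finset (Finset α)) : Prop where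
  nonempty : ∀ B ∈ Q, B.Nonempty
  subset : ∀ B ∈ Q, B ⊆ S
  cover : ∀ x ∈ S, ∃ B ∈ Q, x ∈ B
  eq_of_mem : ∀ B₁ ∈ Q, ∀ B₂ ∈ Q, ∀ x ∈ B₁, x ∈ B₂ → B₁ = B₂
  noncrossing : ∀ B₁ ∈ Q, ∀ B₂ ∈ Q, ∀ a ∈ B₁, ∀ c ∈ B₁, ∀ b ∈ B₂, ∀ d ∈ B₂,
    a < b → b < c → c < d → B₁ = B₂

theorem isNCPartition_iff {S : Finset α} {Q : Finset (Finset α)} :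
    IsNCPartition S Q ↔ (∀ B ∈ Q, B.Nonempty) ∧ (∀ B ∈ Q, B ⊆ S) ∧ (∀ x ∈ S, ∃ B ∈ Q, x ∈ B) ∧
      (∀ B₁ ∈ Q, ∀ B₂ ∈ Q, ∀ x ∈ B₁, x ∈ B₂ → B₁ = B₂) ∧
      ∀ B₁ ∈ Q, ∀ B₂ ∈ Q, ∀ a ∈ B₁, ∀ c ∈ B₁, ∀ b ∈ B₂, ∀ d ∈ B₂,
        a < b → b < c → c < d → B₁ = B₂ :=
  ⟨fun h => ⟨h.1, h.2, h.3, h.4, h.5⟩, fun h => ⟨h.1, h.2.1, h.2.2.1, h.2.2.2.1, h.2.2.2.2⟩⟩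

open scoped Classical in
noncomputable def ncPartitions (S : Finset α) : Finset (Finset (Finset α)) :=
  S.powerset.powerset.filter (IsNCPartition S)

theorem mem_ncPartitions {S : Finset α} {Q : Finset (Finset α)} :
    Q ∈ ncPartitions S ↔ IsNCPartition S Q := by
  classical
  simp only [ncPartitions, mem_filter, mem_powerset, and_iff_right_iff_imp]
  exact fun hQ B hB => mem_powerset.2 (hQ.subset B hB)

theorem NC_eq_ncPartitions (n : ℕ) : NC n = ncPartitions (univ : Finset (Fin n)) := by
  ext P
  simp only [NC, mem_filter, mem_univ, true_and, mem_ncPartitions]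
  constructor
  · rintro ⟨⟨hne, huniq⟩, hnc⟩
    exact ⟨hne, fun _ _ => subset_univ _, fun x _ => (huniq x).exists,
      fun B₁ h₁ B₂ h₂ x hx₁ hx₂ => (huniq x).unique ⟨h₁, hx₁⟩ ⟨h₂, hx₂⟩,
      fun B₁ h₁ B₂ h₂ a ha c hc b hb d hd hab hbc hcd =>
        hnc a b c d hab hbc hcd B₁ h₁ B₂ h₂ ha hc hb hd⟩
  · intro hP
    refine ⟨⟨hP.nonempty, fun x => ?_⟩, fun a b c d hab hbc hcd B₁ h₁ B₂ h₂ ha hc hb hd =>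
      hP.noncrossing B₁ h₁ B₂ h₂ a ha c hc b hb d hd hab hbc hcd⟩
    obtain ⟨B, hB, hxB⟩ := hP.cover x (mem_univ x)
    exact ⟨B, ⟨hB, hxB⟩, fun C ⟨hC, hxC⟩ => hP.eq_of_mem C hC B hB x hxC hxB⟩

theorem ncPartitions_empty : ncPartitions (∅ : Finset α) = {∅} := by
  ext Q
  simp only [mem_ncPartitions, mem_singleton]
  constructor
  · intro hQ
    refine eq_empty_of_forall_notMem fun B hB => ?_
    obtain ⟨x, hx⟩ := hQ.nonempty B hB
    exact notMem_empty x (hQ.subset B hB hx)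
  · rintro rfl
    exact ⟨by simp, by simp, by simp, by simp, by simp⟩

theorem isNCPartition_map_iff (f : α ↪o β) {S : Finset α} {Q : Finset (Finset α)} :
    IsNCPartition (S.map f.toEmbedding) (Q.map (mapEmbedding f.toEmbedding).toEmbedding) ↔
      IsNCPartition S Q := by
  have hmem (x : α) (B : Finset α) : f x ∈ B.map f.toEmbedding ↔ x ∈ B := mem_map' f.toEmbedding
  simp only [isNCPartition_iff, forall_mem_map, map_nonempty, map_subset_map,
    RelEmbedding.coe_toEmbedding, mapEmbedding_apply, hmem, map_inj, f.lt_iff_lt]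
  simp only [mem_map, exists_exists_and_eq_and, RelEmbedding.coe_toEmbedding, mapEmbedding_apply,
    hmem]

theorem ncPartitions_map (f : α ↪o β) (S : Finset α) :
    ncPartitions (S.map f.toEmbedding) =
      (ncPartitions S).map (mapEmbedding (mapEmbedding f.toEmbedding).toEmbedding).toEmbedding := by
  ext Q
  simp only [mem_map, mem_ncPartitions, RelEmbedding.coe_toEmbedding, mapEmbedding_apply]
  constructor
  · intro hQ
    have hsub : Q ⊆ S.powerset.map (mapEmbedding f.toEmbedding).toEmbedding := fun B hB => by
      obtain ⟨u, hu, rfl⟩ := subset_map_iff.1 (hQ.subset B hB)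
      exact mem_map_of_mem _ (mem_powerset.2 hu)
    obtain ⟨P, -, rfl⟩ := subset_map_iff.1 hsub
    exact ⟨P, (isNCPartition_map_iff f).1 hQ, rfl⟩
  · rintro ⟨P, hP, rfl⟩
    exact (isNCPartition_map_iff f).2 hP

theorem sum_ncPartitions_map {M : Type*} [AddCommMonoid M] (f : α ↪o β) (S : Finset α)
    (F : Finset (Finset β) → M) :
    ∑ Q ∈ ncPartitions (S.map f.toEmbedding), F Q =
      ∑ P ∈ ncPartitions S, F (P.map (mapEmbedding f.toEmbedding).toEmbedding) := by
  rw [ncPartitions_map, sum_map]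
  rfl

/-- `∅` when no block of `Q` contains `x`. -/
def blockOf (Q : Finset (Finset α)) (x : α) : Finset α := (Q.filter (x ∈ ·)).sup id

theorem blockOf_eq_empty {Q : Finset (Finset α)} {x : α} (h : ∀ B ∈ Q, x ∉ B) :
    blockOf Q x = ∅ := by
  rw [blockOf, filter_false_of_mem h, sup_empty, bot_eq_empty]

def restrictTo (T : Finset α) (Q : Finset (Finset α)) : Finset (Finset α) :=
  (Q.image (· ∩ T)).erase ∅

theorem mem_restrictTo {T C : Finset α} {Q : Finset (Finset α)} :
    C ∈ restrictTo T Q ↔ C ≠ ∅ ∧ ∃ B ∈ Q, B ∩ T = C := by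
  simp [restrictTo]

/-- If `c` lies in no block, `{p}` becomes a new block. -/
def attachToBlock (p c : α) (Q : Finset (Finset α)) : Finset (Finset α) :=
  insert (insert p (blockOf Q c)) (Q.erase (blockOf Q c))

namespace IsNCPartition

variable {S : Finset α} {Q : Finset (Finset α)}

theorem blockOf_eq (hQ : IsNCPartition S Q) {B : Finset α} {x : α} (hB : B ∈ Q) (hx : x ∈ B) :
    blockOf Q x = B := by
  have : Q.filter (x ∈ ·) = {B} := by
    ext C
    simp only [mem_filter, mem_singleton]
    exact ⟨fun ⟨hC, hxC⟩ => hQ.eq_of_mem C hC B hB x hxC hx, by rintro rfl; exact ⟨hB, hx⟩⟩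
  rw [blockOf, this, sup_singleton, id]

theorem blockOf_mem (hQ : IsNCPartition S Q) {x : α} (hx : x ∈ S) :
    blockOf Q x ∈ Q ∧ x ∈ blockOf Q x := by
  obtain ⟨B, hB, hxB⟩ := hQ.cover x hx
  rw [hQ.blockOf_eq hB hxB]
  exact ⟨hB, hxB⟩

theorem blockOf_eq_empty_of_notMem (hQ : IsNCPartition S Q) {x : α} (hx : x ∉ S) :
    blockOf Q x = ∅ :=
  blockOf_eq_empty fun B hB hxB => hx (hQ.subset B hB hxB)

theorem blockOf_subset (hQ : IsNCPartition S Q) (x : α) : blockOf Q x ⊆ S := by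
  by_cases hx : x ∈ S
  · exact hQ.subset _ (hQ.blockOf_mem hx).1
  · rw [hQ.blockOf_eq_empty_of_notMem hx]
    exact empty_subset S

theorem blockOf_mem_of_mem (hQ : IsNCPartition S Q) {c x : α} (hx : x ∈ blockOf Q c) :
    blockOf Q c ∈ Q ∧ c ∈ blockOf Q c := by
  by_cases hc : c ∈ S
  · exact hQ.blockOf_mem hc
  · rw [hQ.blockOf_eq_empty_of_notMem hc] at hx
    exact absurd hx (notMem_empty x)

theorem restrict (hQ : IsNCPartition S Q) (T : Finset α) :
    IsNCPartition (S ∩ T) (restrictTo T Q) where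
  nonempty C hC := nonempty_iff_ne_empty.2 (mem_restrictTo.1 hC).1
  subset C hC := by
    obtain ⟨-, B, hB, rfl⟩ := mem_restrictTo.1 hC
    exact inter_subset_inter_right (hQ.subset B hB)
  cover x hx := by
    obtain ⟨hxS, hxT⟩ := mem_inter.1 hx
    obtain ⟨B, hB, hxB⟩ := hQ.cover x hxS
    exact ⟨B ∩ T, mem_restrictTo.2 ⟨ne_empty_of_mem (mem_inter.2 ⟨hxB, hxT⟩), B, hB, rfl⟩,
      mem_inter.2 ⟨hxB, hxT⟩⟩
  eq_of_mem C₁ h₁ C₂ h₂ x hx₁ hx₂ := by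
    obtain ⟨-, B₁, hB₁, rfl⟩ := mem_restrictTo.1 h₁
    obtain ⟨-, B₂, hB₂, rfl⟩ := mem_restrictTo.1 h₂
    rw [hQ.eq_of_mem B₁ hB₁ B₂ hB₂ x (mem_inter.1 hx₁).1 (mem_inter.1 hx₂).1]
  noncrossing C₁ h₁ C₂ h₂ a ha c hc b hb d hd hab hbc hcd := by
    obtain ⟨-, B₁, hB₁, rfl⟩ := mem_restrictTo.1 h₁
    obtain ⟨-, B₂, hB₂, rfl⟩ := mem_restrictTo.1 h₂
    rw [hQ.noncrossing B₁ hB₁ B₂ hB₂ a (mem_inter.1 ha).1 c (mem_inter.1 hc).1 b (mem_inter.1 hb).1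
      d (mem_inter.1 hd).1 hab hbc hcd]

theorem restrictTo_of_subset (hQ : IsNCPartition S Q) {T : Finset α} (hST : S ⊆ T) :
    restrictTo T Q = Q := by
  ext C
  simp only [mem_restrictTo]
  constructor
  · rintro ⟨-, B, hB, rfl⟩
    rwa [inter_eq_left.2 ((hQ.subset B hB).trans hST)]
  · intro hC
    exact ⟨(hQ.nonempty C hC).ne_empty, C, hC, inter_eq_left.2 ((hQ.subset C hC).trans hST)⟩

theorem restrictTo_of_disjoint (hQ : IsNCPartition S Q) {T : Finset α} (hST : Disjoint S T) :
    restrictTo T Q = ∅ := by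
  refine eq_empty_of_forall_notMem fun C hC => ?_
  obtain ⟨hC, B, hB, rfl⟩ := mem_restrictTo.1 hC
  exact hC (disjoint_iff_inter_eq_empty.1 (hST.mono_left (hQ.subset B hB)))

theorem union {S₁ S₂ : Finset α} {Q₁ Q₂ : Finset (Finset α)} (h₁ : IsNCPartition S₁ Q₁)
    (h₂ : IsNCPartition S₂ Q₂) (hdisj : Disjoint S₁ S₂)
    (hsep₁ : ∀ a ∈ S₁, ∀ c ∈ S₁, ∀ b ∈ S₂, a < b → b < c → False)
    (hsep₂ : ∀ a ∈ S₂, ∀ c ∈ S₂, ∀ b ∈ S₁, ∀ d ∈ S₁, a < b → b < c → c < d → False) :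
    IsNCPartition (S₁ ∪ S₂) (Q₁ ∪ Q₂) where
  nonempty B hB := (mem_union.1 hB).elim (h₁.nonempty B) (h₂.nonempty B)
  subset B hB := (mem_union.1 hB).elim (fun hB => (h₁.subset B hB).trans subset_union_left)
    (fun hB => (h₂.subset B hB).trans subset_union_right)
  cover x hx := (mem_union.1 hx).elim
    (fun hx => (h₁.cover x hx).imp fun _ ⟨hB, hxB⟩ => ⟨mem_union_left _ hB, hxB⟩)
    (fun hx => (h₂.cover x hx).imp fun _ ⟨hB, hxB⟩ => ⟨mem_union_right _ hB, hxB⟩)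
  eq_of_mem B₁ hB₁ B₂ hB₂ x hx₁ hx₂ := by
    rcases mem_union.1 hB₁ with hB₁ | hB₁ <;> rcases mem_union.1 hB₂ with hB₂ | hB₂
    · exact h₁.eq_of_mem B₁ hB₁ B₂ hB₂ x hx₁ hx₂
    · exact (disjoint_left.1 hdisj (h₁.subset B₁ hB₁ hx₁) (h₂.subset B₂ hB₂ hx₂)).elim
    · exact (disjoint_left.1 hdisj (h₁.subset B₂ hB₂ hx₂) (h₂.subset B₁ hB₁ hx₁)).elim
    · exact h₂.eq_of_mem B₁ hB₁ B₂ hB₂ x hx₁ hx₂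
  noncrossing B₁ hB₁ B₂ hB₂ a ha c hc b hb d hd hab hbc hcd := by
    rcases mem_union.1 hB₁ with hB₁ | hB₁ <;> rcases mem_union.1 hB₂ with hB₂ | hB₂
    · exact h₁.noncrossing B₁ hB₁ B₂ hB₂ a ha c hc b hb d hd hab hbc hcd
    · exact (hsep₁ a (h₁.subset B₁ hB₁ ha) c (h₁.subset B₁ hB₁ hc) b (h₂.subset B₂ hB₂ hb)
        hab hbc).elim
    · exact (hsep₂ a (h₂.subset B₁ hB₁ ha) c (h₂.subset B₁ hB₁ hc) b (h₁.subset B₂ hB₂ hb)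
        d (h₁.subset B₂ hB₂ hd) hab hbc hcd).elim
    · exact h₂.noncrossing B₁ hB₁ B₂ hB₂ a ha c hc b hb d hd hab hbc hcd

theorem mem_attachToBlock {p c : α} {C : Finset α} :
    C ∈ attachToBlock p c Q ↔ C = insert p (blockOf Q c) ∨ (C ≠ blockOf Q c ∧ C ∈ Q) := by
  rw [attachToBlock, mem_insert, mem_erase]

theorem not_crossing_insert_blockOf (hQ : IsNCPartition S Q) {p c : α} (hp : ∀ x ∈ S, p < x)
    (hc : ∀ x ∈ S, c ≤ x) {B : Finset α} (hB : B ∈ Q) (hBc : B ≠ blockOf Q c) {a c' b d : α}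
    (ha : a ∈ insert p (blockOf Q c)) (hc' : c' ∈ insert p (blockOf Q c)) (hb : b ∈ B)
    (hd : d ∈ B) (hab : a < b) (hbc : b < c') (hcd : c' < d) : False := by
  have hc'Bc : c' ∈ blockOf Q c := (mem_insert.1 hc').resolve_left fun h => by
    have := hp b (hQ.subset B hB hb)
    order
  obtain ⟨hBcQ, hcBc⟩ := hQ.blockOf_mem_of_mem hc'Bc
  rcases mem_insert.1 ha with rfl | haBc
  · -- no point of `S` lies below `c`, so `c` can take the place of `a = p` in the crossing
    have hcb : c < b := (hc b (hQ.subset B hB hb)).lt_of_ne fun h =>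
      hBc (hQ.eq_of_mem B hB _ hBcQ b hb (h ▸ hcBc))
    exact hBc (hQ.noncrossing _ hBcQ B hB c hcBc c' hc'Bc b hb d hd hcb hbc hcd).symm
  · exact hBc (hQ.noncrossing _ hBcQ B hB a haBc c' hc'Bc b hb d hd hab hbc hcd).symm

theorem attach (hQ : IsNCPartition S Q) {p c : α} (hp : ∀ x ∈ S, p < x) (hc : ∀ x ∈ S, c ≤ x) :
    IsNCPartition (insert p S) (attachToBlock p c Q) where
  nonempty C hC := by
    rcases mem_attachToBlock.1 hC with rfl | ⟨-, hC⟩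
    exacts [insert_nonempty _ _, hQ.nonempty C hC]
  subset C hC := by
    rcases mem_attachToBlock.1 hC with rfl | ⟨-, hC⟩
    exacts [insert_subset_insert p (hQ.blockOf_subset c),
      (hQ.subset C hC).trans (subset_insert p S)]
  cover x hx := by
    rcases mem_insert.1 hx with rfl | hx
    · exact ⟨_, mem_attachToBlock.2 (Or.inl rfl), mem_insert_self x _⟩
    obtain ⟨B, hB, hxB⟩ := hQ.cover x hx
    by_cases hBc : B = blockOf Q c
    · exact ⟨_, mem_attachToBlock.2 (Or.inl rfl), mem_insert_of_mem (hBc ▸ hxB)⟩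
    · exact ⟨B, mem_attachToBlock.2 (Or.inr ⟨hBc, hB⟩), hxB⟩
  eq_of_mem C₁ h₁ C₂ h₂ x hx₁ hx₂ := by
    have hpB : ∀ B ∈ Q, p ∉ B := fun B hB h => lt_irrefl p (hp p (hQ.subset B hB h))
    rcases mem_attachToBlock.1 h₁ with rfl | ⟨hC₁, h₁⟩ <;>
      rcases mem_attachToBlock.1 h₂ with rfl | ⟨hC₂, h₂⟩
    · rfl
    · have hx := (mem_insert.1 hx₁).resolve_left fun h => hpB C₂ h₂ (h ▸ hx₂)
      exact (hC₂ (hQ.eq_of_mem C₂ h₂ _ (hQ.blockOf_mem_of_mem hx).1 x hx₂ hx)).elim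
    · have hx := (mem_insert.1 hx₂).resolve_left fun h => hpB C₁ h₁ (h ▸ hx₁)
      exact (hC₁ (hQ.eq_of_mem C₁ h₁ _ (hQ.blockOf_mem_of_mem hx).1 x hx₁ hx)).elim
    · exact hQ.eq_of_mem C₁ h₁ C₂ h₂ x hx₁ hx₂
  noncrossing C₁ h₁ C₂ h₂ a ha c' hc' b hb d hd hab hbc hcd := by
    rcases mem_attachToBlock.1 h₁ with rfl | ⟨hC₁, h₁⟩ <;>
      rcases mem_attachToBlock.1 h₂ with rfl | ⟨hC₂, h₂⟩
    · rfl
    · exact (hQ.not_crossing_insert_blockOf hp hc h₂ hC₂ ha hc' hb hd hab hbc hcd).elim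
    · have hpa := hp a (hQ.subset C₁ h₁ ha)
      have hb' := (mem_insert.1 hb).resolve_left (by rintro rfl; order)
      have hd' := (mem_insert.1 hd).resolve_left (by rintro rfl; order)
      exact (hC₁ (hQ.noncrossing C₁ h₁ _ (hQ.blockOf_mem_of_mem hb').1 a ha c' hc' b hb' d hd'
        hab hbc hcd)).elim
    · exact hQ.noncrossing C₁ h₁ C₂ h₂ a ha c' hc' b hb d hd hab hbc hcd

theorem restrictTo_attachToBlock (hQ : IsNCPartition S Q) {p : α} (hp : p ∉ S) (c : α) :
    restrictTo S (attachToBlock p c Q) = Q := by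
  have hBc : insert p (blockOf Q c) ∩ S = blockOf Q c := by
    rw [insert_inter_of_notMem hp, inter_eq_left.2 (hQ.blockOf_subset c)]
  ext C
  rw [mem_restrictTo]
  constructor
  · rintro ⟨hC, B, hB, rfl⟩
    rcases mem_attachToBlock.1 hB with rfl | ⟨-, hB⟩
    · rw [hBc] at hC ⊢
      obtain ⟨x, hx⟩ := nonempty_iff_ne_empty.2 hC
      exact (hQ.blockOf_mem_of_mem hx).1
    · rwa [inter_eq_left.2 (hQ.subset B hB)]
  · intro hC
    refine ⟨(hQ.nonempty C hC).ne_empty, ?_⟩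
    by_cases hCc : C = blockOf Q c
    · exact ⟨_, mem_attachToBlock.2 (Or.inl rfl), hCc ▸ hBc⟩
    · exact ⟨C, mem_attachToBlock.2 (Or.inr ⟨hCc, hC⟩), inter_eq_left.2 (hQ.subset C hC)⟩

theorem blockOf_map (hQ : IsNCPartition S Q) (f : α ↪o β) (x : α) :
    blockOf (Q.map (mapEmbedding f.toEmbedding).toEmbedding) (f x) =
      (blockOf Q x).map f.toEmbedding := by
  have hQf := (isNCPartition_map_iff f).2 hQ
  by_cases hx : x ∈ S
  · obtain ⟨hB, hxB⟩ := hQ.blockOf_mem hx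
    exact hQf.blockOf_eq (mem_map_of_mem _ hB) (mem_map_of_mem f.toEmbedding hxB)
  · rw [hQ.blockOf_eq_empty_of_notMem hx, hQf.blockOf_eq_empty_of_notMem, map_empty]
    exact fun h => hx ((mem_map' f.toEmbedding).1 h)

end IsNCPartition

theorem restrictTo_union (T : Finset α) (Q₁ Q₂ : Finset (Finset α)) :
    restrictTo T (Q₁ ∪ Q₂) = restrictTo T Q₁ ∪ restrictTo T Q₂ := by
  rw [restrictTo, image_union, erase_union_distrib, restrictTo, restrictTo]

def blockWeight (r φ : ℕ → ℝ) (p : α) (Q : Finset (Finset α)) : ℝ :=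
  φ #(blockOf Q p) * ∏ B ∈ Q.erase (blockOf Q p), r #B

theorem IsNCPartition.blockWeight_map {S : Finset α} {Q : Finset (Finset α)}
    (hQ : IsNCPartition S Q) (r φ : ℕ → ℝ) (f : α ↪o β) (p : α) :
    blockWeight r φ (f p) (Q.map (mapEmbedding f.toEmbedding).toEmbedding) =
      blockWeight r φ p Q := by
  rw [blockWeight, hQ.blockOf_map f, ← mapEmbedding_apply, ← RelEmbedding.coe_toEmbedding,
    ← map_erase, prod_map]
  simp [blockWeight]

end Partitions

section FirstBlock

noncomputable def freeMoment (r : ℕ → ℝ) (n : ℕ) : ℝ :=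
  ∑ Q ∈ ncPartitions (range n), ∏ B ∈ Q, r #B

noncomputable def firstBlockSum (r φ : ℕ → ℝ) (n : ℕ) : ℝ :=
  ∑ Q ∈ ncPartitions (range n), blockWeight r φ 0 Q

/-- The second element of the block of `0`, or `n + 1` if that block is a singleton. -/
def nextInFirstBlock (n : ℕ) (Q : Finset (Finset ℕ)) : ℕ :=
  (insert (n + 1) ((blockOf Q 0).erase 0)).min' (insert_nonempty _ _)

def glue (s : ℕ) (P₁ P₂ : Finset (Finset ℕ)) : Finset (Finset ℕ) :=
  P₁ ∪ attachToBlock 0 s P₂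

variable {n s : ℕ} {Q P₁ P₂ : Finset (Finset ℕ)}

theorem isNCPartition_attachToBlock_zero (hs : 1 ≤ s) (hP₂ : IsNCPartition (Ico s (n + 1)) P₂) :
    IsNCPartition (insert 0 (Ico s (n + 1))) (attachToBlock 0 s P₂) :=
  hP₂.attach (fun x hx => by rw [mem_Ico] at hx; omega) fun x hx => (mem_Ico.1 hx).1

theorem isNCPartition_glue (hs : s ∈ Ico 1 (n + 2)) (hP₁ : IsNCPartition (Ico 1 s) P₁)
    (hP₂ : IsNCPartition (Ico s (n + 1)) P₂) : IsNCPartition (range (n + 1)) (glue s P₁ P₂) := by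
  rw [mem_Ico] at hs
  have hS : Ico 1 s ∪ insert 0 (Ico s (n + 1)) = range (n + 1) := by
    ext x
    simp only [mem_range, mem_union, mem_Ico, mem_insert]
    omega
  rw [← hS]
  refine hP₁.union (isNCPartition_attachToBlock_zero hs.1 hP₂) ?_ ?_ ?_ <;>
    simp only [disjoint_left, mem_Ico, mem_insert] <;> intros <;> omega

theorem blockOf_glue_zero (hs : s ∈ Ico 1 (n + 2)) (hP₁ : IsNCPartition (Ico 1 s) P₁)
    (hP₂ : IsNCPartition (Ico s (n + 1)) P₂) :
    blockOf (glue s P₁ P₂) 0 = insert 0 (blockOf P₂ s) :=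
  (isNCPartition_glue hs hP₁ hP₂ |>.blockOf_eq (mem_union_right _ (IsNCPartition.mem_attachToBlock.2
    (Or.inl rfl))) (mem_insert_self 0 _))

theorem nextInFirstBlock_glue (hs : s ∈ Ico 1 (n + 2)) (hP₁ : IsNCPartition (Ico 1 s) P₁)
    (hP₂ : IsNCPartition (Ico s (n + 1)) P₂) : nextInFirstBlock n (glue s P₁ P₂) = s := by
  have hsub := hP₂.blockOf_subset s
  rw [mem_Ico] at hs
  rw [nextInFirstBlock, min'_eq_iff, blockOf_glue_zero (mem_Ico.2 hs) hP₁ hP₂,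
    erase_insert fun h => by have := mem_Ico.1 (hsub h); omega]
  constructor
  · rcases (Nat.lt_succ_iff.1 hs.2).lt_or_eq with hsn | rfl
    · exact mem_insert_of_mem (hP₂.blockOf_mem (mem_Ico.2 ⟨le_rfl, hsn⟩)).2
    · exact mem_insert_self _ _
  · intro b hb
    rcases mem_insert.1 hb with rfl | hb
    · omega
    · exact (mem_Ico.1 (hsub hb)).1

theorem restrictTo_glue_left (hs : s ∈ Ico 1 (n + 2)) (hP₁ : IsNCPartition (Ico 1 s) P₁)
    (hP₂ : IsNCPartition (Ico s (n + 1)) P₂) : restrictTo (Ico 1 s) (glue s P₁ P₂) = P₁ := by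
  rw [mem_Ico] at hs
  rw [glue, restrictTo_union, hP₁.restrictTo_of_subset subset_rfl,
    (isNCPartition_attachToBlock_zero hs.1 hP₂).restrictTo_of_disjoint, union_empty]
  simp only [disjoint_left, mem_Ico, mem_insert]
  omega

theorem restrictTo_glue_right (hs : s ∈ Ico 1 (n + 2)) (hP₁ : IsNCPartition (Ico 1 s) P₁)
    (hP₂ : IsNCPartition (Ico s (n + 1)) P₂) :
    restrictTo (Ico s (n + 1)) (glue s P₁ P₂) = P₂ := by
  rw [mem_Ico] at hs
  rw [glue, restrictTo_union, hP₁.restrictTo_of_disjoint, empty_union,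
    hP₂.restrictTo_attachToBlock (by rw [mem_Ico]; omega)]
  simp only [disjoint_left, mem_Ico]
  omega

theorem nextInFirstBlock_mem_Ico : nextInFirstBlock n Q ∈ Ico 1 (n + 2) := by
  have hmem := min'_mem (insert (n + 1) ((blockOf Q 0).erase 0)) (insert_nonempty _ _)
  have hle := min'_le (insert (n + 1) ((blockOf Q 0).erase 0)) (n + 1) (mem_insert_self _ _)
  rw [← nextInFirstBlock] at hmem hle
  rw [mem_Ico]
  rcases mem_insert.1 hmem with h | h
  · omega
  · have := (mem_erase.1 h).1
    omega

theorem nextInFirstBlock_le {x : ℕ} (hx : x ∈ blockOf Q 0) (hx0 : x ≠ 0) :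
    nextInFirstBlock n Q ≤ x :=
  min'_le _ _ (mem_insert_of_mem (mem_erase.2 ⟨hx0, hx⟩))

theorem nextInFirstBlock_mem_blockOf (h : nextInFirstBlock n Q ≤ n) :
    nextInFirstBlock n Q ∈ blockOf Q 0 := by
  have hmem := min'_mem (insert (n + 1) ((blockOf Q 0).erase 0)) (insert_nonempty _ _)
  rw [← nextInFirstBlock] at hmem
  rcases mem_insert.1 hmem with h' | h'
  · omega
  · exact mem_of_mem_erase h'

namespace IsNCPartition

-- A block meeting both sides of `s` would cross the block `{0, s, …}`.
theorem subset_Ico_or_subset_Ico (hQ : IsNCPartition (range (n + 1)) Q) {B : Finset ℕ}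
    (hB : B ∈ Q) (hB₀ : B ≠ blockOf Q 0) :
    B ⊆ Ico 1 (nextInFirstBlock n Q) ∨ B ⊆ Ico (nextInFirstBlock n Q) (n + 1) := by
  set s := nextInFirstBlock n Q
  obtain ⟨hB₀Q, h0B₀⟩ := hQ.blockOf_mem (x := 0) (by simp)
  have h0 : 0 ∉ B := fun h => hB₀ (hQ.blockOf_eq hB h).symm
  by_contra! hcon
  obtain ⟨⟨x, hxB, hxL⟩, ⟨y, hyB, hyH⟩⟩ := And.intro (not_subset.1 hcon.1) (not_subset.1 hcon.2)
  have hx := mem_range.1 (hQ.subset B hB hxB)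
  have hy := mem_range.1 (hQ.subset B hB hyB)
  have hx0 : x ≠ 0 := fun h => h0 (h ▸ hxB)
  have hy0 : y ≠ 0 := fun h => h0 (h ▸ hyB)
  simp only [mem_Ico, not_and, not_lt] at hxL hyH
  have hsx : s ≤ x := hxL (by omega)
  have hys : y < s := by by_contra!; exact absurd (hyH this) (by omega)
  have hsB₀ : s ∈ blockOf Q 0 := nextInFirstBlock_mem_blockOf (by omega)
  have hsx' : s < x := hsx.lt_of_ne fun h => hB₀ (hQ.eq_of_mem B hB _ hB₀Q x hxB (h ▸ hsB₀))
  exact hB₀ (hQ.noncrossing _ hB₀Q B hB 0 h0B₀ s hsB₀ y hyB x hxB (by omega) hys hsx').symm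

theorem blockOf_restrictTo_nextInFirstBlock (hQ : IsNCPartition (range (n + 1)) Q) :
    blockOf (restrictTo (Ico (nextInFirstBlock n Q) (n + 1)) Q) (nextInFirstBlock n Q) =
      blockOf Q 0 ∩ Ico (nextInFirstBlock n Q) (n + 1) := by
  have hs := mem_Ico.1 (nextInFirstBlock_mem_Ico (n := n) (Q := Q))
  set s := nextInFirstBlock n Q
  obtain ⟨hB₀Q, -⟩ := hQ.blockOf_mem (x := 0) (by simp)
  rcases Nat.lt_succ_iff.1 hs.2 |>.lt_or_eq with hsn | hsn
  · have hsB₀ : s ∈ blockOf Q 0 ∩ Ico s (n + 1) :=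
      mem_inter.2 ⟨nextInFirstBlock_mem_blockOf (by omega), mem_Ico.2 ⟨le_rfl, hsn⟩⟩
    exact (hQ.restrict _).blockOf_eq (mem_restrictTo.2 ⟨ne_empty_of_mem hsB₀, _, hB₀Q, rfl⟩) hsB₀
  · rw [hsn, Ico_self, inter_empty]
    exact (hQ.restrict _).blockOf_eq_empty_of_notMem (by simp)

theorem insert_zero_blockOf_inter_Ico (hQ : IsNCPartition (range (n + 1)) Q) :
    insert 0 (blockOf Q 0 ∩ Ico (nextInFirstBlock n Q) (n + 1)) = blockOf Q 0 := by
  obtain ⟨hB₀Q, h0B₀⟩ := hQ.blockOf_mem (x := 0) (by simp)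
  refine (insert_subset h0B₀ inter_subset_left).antisymm fun x hx => ?_
  by_cases hx0 : x = 0
  · simp [hx0]
  · exact mem_insert_of_mem (mem_inter.2 ⟨hx, mem_Ico.2
      ⟨nextInFirstBlock_le hx hx0, mem_range.1 (hQ.subset _ hB₀Q hx)⟩⟩)

theorem glue_restrictTo (hQ : IsNCPartition (range (n + 1)) Q) :
    glue (nextInFirstBlock n Q) (restrictTo (Ico 1 (nextInFirstBlock n Q)) Q)
      (restrictTo (Ico (nextInFirstBlock n Q) (n + 1)) Q) = Q := by
  have hB₀ := hQ.insert_zero_blockOf_inter_Ico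
  set s := nextInFirstBlock n Q
  set B₀ := blockOf Q 0
  obtain ⟨hB₀Q, -⟩ := hQ.blockOf_mem (x := 0) (by simp)
  have hLH : Disjoint (Ico 1 s) (Ico s (n + 1)) := Ico_disjoint_Ico_consecutive 1 s (n + 1)
  have hB₀L : B₀ ∩ Ico 1 s = ∅ := by
    refine disjoint_iff_inter_eq_empty.1 (disjoint_left.2 fun x hx hxL => ?_)
    rw [← hB₀, mem_insert, mem_inter, mem_Ico] at hx
    rw [mem_Ico] at hxL
    omega
  ext C
  rw [glue, mem_union, mem_attachToBlock, blockOf_restrictTo_nextInFirstBlock hQ, hB₀]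
  constructor
  · rintro (hC | rfl | ⟨hCB₀, hC⟩)
    · obtain ⟨hC, B, hB, rfl⟩ := mem_restrictTo.1 hC
      rcases hQ.subset_Ico_or_subset_Ico hB (by rintro rfl; exact hC hB₀L) with h | h
      · rwa [inter_eq_left.2 h]
      · exact (hC (disjoint_iff_inter_eq_empty.1 (hLH.symm.mono_left h))).elim
    · exact hB₀Q
    · obtain ⟨hC, B, hB, rfl⟩ := mem_restrictTo.1 hC
      rcases hQ.subset_Ico_or_subset_Ico hB (by rintro rfl; exact hCB₀ rfl) with h | h
      · exact (hC (disjoint_iff_inter_eq_empty.1 (hLH.mono_left h))).elim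
      · rwa [inter_eq_left.2 h]
  · intro hC
    by_cases hCB₀ : C = B₀
    · exact Or.inr (Or.inl hCB₀)
    obtain ⟨x, hx⟩ := hQ.nonempty C hC
    rcases hQ.subset_Ico_or_subset_Ico hC hCB₀ with h | h
    · exact Or.inl (mem_restrictTo.2 ⟨ne_empty_of_mem hx, C, hC, inter_eq_left.2 h⟩)
    · refine Or.inr (Or.inr ⟨fun hCeq => hCB₀ ?_,
        mem_restrictTo.2 ⟨ne_empty_of_mem hx, C, hC, inter_eq_left.2 h⟩⟩)
      exact hQ.eq_of_mem C hC B₀ hB₀Q x hx (mem_inter.1 (hCeq ▸ hx)).1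

end IsNCPartition

theorem blockWeight_glue (r φ : ℕ → ℝ) (hs : s ∈ Ico 1 (n + 2))
    (hP₁ : IsNCPartition (Ico 1 s) P₁) (hP₂ : IsNCPartition (Ico s (n + 1)) P₂) :
    blockWeight r φ 0 (glue s P₁ P₂) =
      (∏ B ∈ P₁, r #B) * blockWeight r (fun k => φ (k + 1)) s P₂ := by
  have hs' := mem_Ico.1 hs
  have h₁ : ∀ B ∈ P₁, 0 ∉ B := fun B hB h => by have := mem_Ico.1 (hP₁.subset B hB h); omega
  have h₂ : ∀ B ∈ P₂, 0 ∉ B := fun B hB h => by have := mem_Ico.1 (hP₂.subset B hB h); omega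
  have h0s : 0 ∉ blockOf P₂ s := fun h => by have := mem_Ico.1 (hP₂.blockOf_subset s h); omega
  have herase : (glue s P₁ P₂).erase (insert 0 (blockOf P₂ s)) =
      P₁ ∪ P₂.erase (blockOf P₂ s) := by
    rw [glue, attachToBlock, erase_union_distrib, erase_insert_eq_erase,
      erase_eq_of_notMem fun h => h₁ _ h (mem_insert_self 0 _),
      erase_eq_of_notMem fun h => h₂ _ (mem_of_mem_erase h) (mem_insert_self 0 _)]
  have hdisj : Disjoint P₁ (P₂.erase (blockOf P₂ s)) := disjoint_left.2 fun B hB₁ hB₂ => by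
    obtain ⟨x, hx⟩ := hP₁.nonempty B hB₁
    have := mem_Ico.1 (hP₁.subset B hB₁ hx)
    have := mem_Ico.1 (hP₂.subset B (mem_of_mem_erase hB₂) hx)
    omega
  rw [blockWeight, blockOf_glue_zero hs hP₁ hP₂, herase, prod_union hdisj,
    card_insert_of_notMem h0s, blockWeight]
  ring

theorem sum_blockWeight_range_succ (r φ : ℕ → ℝ) (n : ℕ) :
    ∑ Q ∈ ncPartitions (range (n + 1)), blockWeight r φ 0 Q =
      ∑ s ∈ Ico 1 (n + 2), (∑ P ∈ ncPartitions (Ico 1 s), ∏ B ∈ P, r #B) *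
        ∑ P ∈ ncPartitions (Ico s (n + 1)), blockWeight r (fun k => φ (k + 1)) s P := by
  simp_rw [sum_mul_sum, ← sum_product']
  rw [sum_sigma']
  refine (sum_nbij' (fun x => glue x.1 x.2.1 x.2.2) (fun Q => ⟨nextInFirstBlock n Q,
    restrictTo (Ico 1 (nextInFirstBlock n Q)) Q, restrictTo (Ico (nextInFirstBlock n Q) (n + 1)) Q⟩)
    ?_ ?_ ?_ ?_ ?_).symm
  · rintro ⟨s, P₁, P₂⟩ hx
    simp only [mem_sigma, mem_product, mem_ncPartitions] at hx ⊢
    exact isNCPartition_glue hx.1 hx.2.1 hx.2.2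
  · intro Q hQ
    rw [mem_ncPartitions] at hQ
    have hs := nextInFirstBlock_mem_Ico (n := n) (Q := Q)
    simp only [mem_sigma, mem_product, mem_ncPartitions]
    rw [mem_Ico] at hs
    refine ⟨mem_Ico.2 hs, ?_, ?_⟩
    · convert hQ.restrict (Ico 1 (nextInFirstBlock n Q)) using 1
      rw [inter_eq_right.2 fun x hx => by rw [mem_Ico] at hx; rw [mem_range]; omega]
    · convert hQ.restrict (Ico (nextInFirstBlock n Q) (n + 1)) using 1
      rw [inter_eq_right.2 fun x hx => by rw [mem_Ico] at hx; rw [mem_range]; omega]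
  · rintro ⟨s, P₁, P₂⟩ hx
    simp only [mem_sigma, mem_product, mem_ncPartitions] at hx
    obtain ⟨hs, hP₁, hP₂⟩ := hx
    simp only [nextInFirstBlock_glue hs hP₁ hP₂, restrictTo_glue_left hs hP₁ hP₂,
      restrictTo_glue_right hs hP₁ hP₂]
  · intro Q hQ
    exact (mem_ncPartitions.1 hQ).glue_restrictTo
  · rintro ⟨s, P₁, P₂⟩ hx
    simp only [mem_sigma, mem_product, mem_ncPartitions] at hx
    exact (blockWeight_glue r φ hx.1 hx.2.1 hx.2.2).symm

theorem Ico_eq_map_range (a b : ℕ) :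
    Ico a b = (range (b - a)).map (OrderEmbedding.addRight a).toEmbedding := by
  ext x
  simp only [mem_Ico, mem_map, mem_range, RelEmbedding.coe_toEmbedding,
    OrderEmbedding.addRight_apply]
  exact ⟨fun hx => ⟨x - a, by omega, by omega⟩, by rintro ⟨y, hy, rfl⟩; omega⟩

theorem sum_prod_ncPartitions_Ico (r : ℕ → ℝ) (a b : ℕ) :
    ∑ P ∈ ncPartitions (Ico a b), ∏ B ∈ P, r #B = freeMoment r (b - a) := by
  rw [Ico_eq_map_range, sum_ncPartitions_map, freeMoment]
  simp only [prod_map, RelEmbedding.coe_toEmbedding, mapEmbedding_apply, card_map]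

theorem sum_blockWeight_ncPartitions_Ico (r φ : ℕ → ℝ) (a b : ℕ) :
    ∑ P ∈ ncPartitions (Ico a b), blockWeight r φ a P = firstBlockSum r φ (b - a) := by
  rw [Ico_eq_map_range, sum_ncPartitions_map, firstBlockSum]
  refine sum_congr rfl fun P hP => ?_
  simpa using (mem_ncPartitions.1 hP).blockWeight_map r φ (OrderEmbedding.addRight a) 0

theorem firstBlockSum_succ (r φ : ℕ → ℝ) (n : ℕ) :
    firstBlockSum r φ (n + 1) =
      ∑ p ∈ antidiagonal n, freeMoment r p.1 * firstBlockSum r (fun k => φ (k + 1)) p.2 := by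
  rw [firstBlockSum, sum_blockWeight_range_succ, Nat.sum_antidiagonal_eq_sum_range_succ_mk,
    sum_Ico_eq_sum_range, show n + 2 - 1 = n.succ by omega]
  refine sum_congr rfl fun i hi => ?_
  rw [mem_range] at hi
  rw [sum_prod_ncPartitions_Ico, sum_blockWeight_ncPartitions_Ico]
  congr 2 <;> omega

end FirstBlock

section PowerSeries

theorem freeMoment_zero (r : ℕ → ℝ) : freeMoment r 0 = 1 := by
  simp [freeMoment, ncPartitions_empty]

theorem firstBlockSum_zero (r φ : ℕ → ℝ) : firstBlockSum r φ 0 = φ 0 := by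
  simp [firstBlockSum, ncPartitions_empty, blockWeight, blockOf]

theorem coeff_Mser_freeMoment (r : ℕ → ℝ) (k : ℕ) :
    coeff k (Mser (freeMoment r)) = freeMoment r k := by
  rw [Mser, coeff_mk]
  split_ifs with h
  · rw [h, freeMoment_zero]
  · rfl

theorem sum_NC_eq_freeMoment (r : ℕ → ℝ) (n : ℕ) :
    ∑ P ∈ NC n, ∏ B ∈ P, r #B = freeMoment r n := by
  have : range n = (univ : Finset (Fin n)).map (Fin.valOrderEmb n).toEmbedding := by
    rw [← Nat.Iio_eq_range]
    exact Fin.map_valEmbedding_univ.symm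
  rw [NC_eq_ncPartitions, freeMoment, this, sum_ncPartitions_map]
  simp only [prod_map, RelEmbedding.coe_toEmbedding, mapEmbedding_apply, card_map]

theorem coeff_X_mul_Mser_pow (r : ℕ → ℝ) (k n : ℕ) :
    coeff n ((X * Mser (freeMoment r)) ^ k) =
      firstBlockSum r (fun c => if c = k then 1 else 0) n := by
  induction k generalizing n with
  | zero =>
    cases n with
    | zero => simp [firstBlockSum_zero]
    | succ n =>
      rw [firstBlockSum_succ]
      simp [firstBlockSum, blockWeight]
  | succ k ih =>
    cases n with
    | zero => simp [firstBlockSum_zero]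
    | succ n =>
      rw [pow_succ', mul_assoc, coeff_succ_X_mul, coeff_mul, firstBlockSum_succ]
      refine sum_congr rfl fun p _ => ?_
      simp only [coeff_Mser_freeMoment, ih, add_left_inj]

theorem firstBlockSum_eq_sum (r φ : ℕ → ℝ) (n : ℕ) :
    firstBlockSum r φ n =
      ∑ k ∈ range (n + 1), φ k * firstBlockSum r (fun c => if c = k then 1 else 0) n := by
  simp only [firstBlockSum, mul_sum]
  rw [sum_comm]
  refine sum_congr rfl fun Q hQ => ?_
  have hcard : #(blockOf Q 0) < n + 1 := by
    have := card_le_card ((mem_ncPartitions.1 hQ).blockOf_subset 0)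
    rw [card_range] at this
    omega
  simp [blockWeight, hcard]

theorem firstBlockSum_coeff_Rser (r : ℕ → ℝ) {n : ℕ} (hn : n ≠ 0) :
    firstBlockSum r (fun k => coeff k (Rser r)) n = freeMoment r n := by
  refine sum_congr rfl fun Q hQ => ?_
  obtain ⟨hB₀, h0⟩ :=
    (mem_ncPartitions.1 hQ).blockOf_mem (x := 0) (by simpa [Nat.pos_iff_ne_zero])
  rw [blockWeight, Rser, coeff_mk, if_neg (card_ne_zero_of_mem h0),
    mul_prod_erase Q (fun B => r #B) hB₀]

theorem coeff_psComp_Rser_freeMoment (r : ℕ → ℝ) {n : ℕ} (hn : n ≠ 0) :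
    coeff n (psComp (Rser r) (X * Mser (freeMoment r))) = freeMoment r n := by
  rw [psComp, coeff_mk, ← firstBlockSum_coeff_Rser r hn, firstBlockSum_eq_sum]
  simp_rw [coeff_X_mul_Mser_pow]

theorem Mser_freeMoment_eq_one_add_psComp (r : ℕ → ℝ) :
    Mser (freeMoment r) = 1 + psComp (Rser r) (X * Mser (freeMoment r)) := by
  ext n
  rw [map_add, coeff_one, coeff_Mser_freeMoment]
  rcases eq_or_ne n 0 with rfl | hn
  · simp [psComp, Rser, freeMoment_zero]
  · rw [if_neg hn, zero_add, coeff_psComp_Rser_freeMoment r hn]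

theorem coeff_psComp_congr (f : PowerSeries ℝ) {a b : PowerSeries ℝ} {n : ℕ}
    (h : X ^ (n + 1) ∣ a - b) : coeff n (psComp f a) = coeff n (psComp f b) := by
  simp only [psComp, coeff_mk]
  refine sum_congr rfl fun k _ => ?_
  have := X_pow_dvd_iff.1 (h.trans (sub_dvd_pow_sub_pow a b k)) n (Nat.lt_succ_self n)
  rw [map_sub, sub_eq_zero] at this
  rw [this]

theorem eq_of_eq_one_add_psComp {f M₁ M₂ : PowerSeries ℝ} (h₁ : M₁ = 1 + psComp f (X * M₁))
    (h₂ : M₂ = 1 + psComp f (X * M₂)) : M₁ = M₂ := by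
  -- the `n`-th coefficient of `psComp f (X * M)` only sees the coefficients of `M` below `n`
  have key : ∀ n, X ^ n ∣ M₁ - M₂ := by
    intro n
    induction n with
    | zero => simp
    | succ n ih =>
      refine X_pow_dvd_iff.2 fun m hm => ?_
      rcases (Nat.lt_succ_iff.1 hm).lt_or_eq with hm | rfl
      · exact X_pow_dvd_iff.1 ih m hm
      · have hX : X ^ (m + 1) ∣ X * M₁ - X * M₂ := by
          rw [← mul_sub, pow_succ']
          exact mul_dvd_mul_left X ih
        rw [map_sub, sub_eq_zero, h₁, h₂, map_add, map_add, coeff_psComp_congr f hX]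
  ext n
  have := X_pow_dvd_iff.1 (key (n + 1)) n (Nat.lt_succ_self n)
  rwa [map_sub, sub_eq_zero] at this

theorem Mser_eq_Mser_iff {m m' : ℕ → ℝ} : Mser m = Mser m' ↔ ∀ n, 1 ≤ n → m n = m' n := by
  constructor
  · intro h n hn
    simpa [Mser, coeff_mk, Nat.one_le_iff_ne_zero.1 hn] using congrArg (coeff n) h
  · intro h
    ext n
    simp only [Mser, coeff_mk]
    split_ifs with hn
    · rfl
    · exact h n (Nat.one_le_iff_ne_zero.2 hn)

end PowerSeries

/-- Proposition 2.1 (1) ⟺ (3): for `G(z) = z⁻¹ + ∑ m_n z^{-n-1}` and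
`K(z) = z⁻¹ + ∑ r_n z^{n-1}`, the functional relation `K(G(z)) = z` holds at the level
of formal (Laurent) power series — which, after multiplying through by `G`, is the
power-series identity `M = 1 + R̂(w·M)` in the variable `w = 1/z` — if and only if the
free moment-cumulant formula `m_n = ∑_{π ∈ NC(n)} ∏_{V ∈ π} r_{|V|}` holds for all `n ≥ 1`. -/
theorem K_comp_G_eq_id_iff_moment_cumulant (m r : ℕ → ℝ) :
    Mser m = 1 + psComp (Rser r) (PowerSeries.X * Mser m) ↔
      ∀ n : ℕ, 1 ≤ n → m n = ∑ P ∈ NC n, ∏ B ∈ P, r B.card := by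
  simp only [sum_NC_eq_freeMoment, ← Mser_eq_Mser_iff]
  exact ⟨fun h => eq_of_eq_one_add_psComp h (Mser_freeMoment_eq_one_add_psComp r),
    fun h => h ▸ Mser_freeMoment_eq_one_add_psComp r⟩
end

section
/- With the hypotheses of the infinitesimal moment-cumulant setting (G(K(z)) = z for formal series G, K as above), the functional relation g(z) = −r(G(z))·G'(z) holds if and only if r(z) = −g(K(z))·K'(z) holds. -/
/-!
Put `φ = X·M`, so that `G(K(z)) = z` reads `N ∘ φ = M` in the variable `w = 1/z`, and encode
`1/K(z) = z·N(z)⁻¹`. Then `ψ = X·N⁻¹` satisfies `ψ ∘ φ = X`, and differentiating `N ∘ φ = M`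
(the identity `G'(K(z))·K'(z) = 1`) gives `(N₂ ∘ φ)·φ' = M²`. Since `φ` has a compositional
inverse, composing with `φ` is injective; it turns the second relation into
`X²M²·(r ∘ φ) = X²·g·(N₂ ∘ φ)`, which is the first relation `g = (r ∘ φ)·φ'` multiplied by
`N₂ ∘ φ ≠ 0`.
-/

open PowerSeries

/-- `N(z) = 1 + ∑_{n≥1} r_n zⁿ`, so that `K(z) = N(z)/z`. -/
noncomputable def Nser (r : ℕ → ℝ) : PowerSeries ℝ :=
  PowerSeries.mk fun k => if k = 0 then 1 else r k

/-- `N₂(z) = 1 − ∑_{n≥2} (n-1) r_n zⁿ`, so that `K'(z) = −z⁻²·N₂(z)`. -/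
noncomputable def N2ser (r : ℕ → ℝ) : PowerSeries ℝ :=
  PowerSeries.mk fun k => if k = 0 then 1 else -((k : ℝ) - 1) * r k

/-- `ĝ(y) = ∑_{n≥1} m'_n y^{n+1}`, so that `g(z) = ∑_{n≥1} m'_n z^{-n-1} = ĝ(1/z)`. -/
noncomputable def Ghat (m' : ℕ → ℝ) : PowerSeries ℝ :=
  PowerSeries.mk fun k => if k ≤ 1 then 0 else m' (k - 1)

/-- `∑_k (k+1) m_k w^k`, encoding `-G'(z)`. -/
noncomputable def Dser (m : ℕ → ℝ) : PowerSeries ℝ :=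
  PowerSeries.mk fun k => ((k : ℝ) + 1) * (if k = 0 then 1 else m k)

/-- `∑_k m'_{k+1} w^k`, encoding `g(z) = ∑_{n≥1} m'_n z^{-n-1}`. -/
noncomputable def M'ser (m' : ℕ → ℝ) : PowerSeries ℝ :=
  PowerSeries.mk fun k => m' (k + 1)

/-- `∑_k r'_{k+1} y^k`, encoding `r(z) = ∑_{n≥1} r'_n z^{n-1}`. -/
noncomputable def R'ser (r' : ℕ → ℝ) : PowerSeries ℝ :=
  PowerSeries.mk fun k => r' (k + 1)

namespace PowerSeries

variable {R : Type*} [CommRing R]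

theorem subst_injective {P : R⟦X⟧} (hP : constantCoeff P = 0) (hP' : IsUnit (coeff 1 P)) :
    Function.Injective (fun f : R⟦X⟧ => f.subst P) := by
  refine Function.LeftInverse.injective (g := PowerSeries.subst (P.substInvOfIsUnit hP')) fun f => ?_
  rw [subst_comp_subst_apply (.of_constantCoeff_zero' hP) (.substInvOfIsUnit P hP'),
    subst_substInvOfIsUnit_right P hP hP', X_subst]

theorem subst_one {a : R⟦X⟧} (ha : HasSubst a) : (1 : R⟦X⟧).subst a = 1 := by
  rw [← coe_substAlgHom ha, map_one]

theorem hasSubst_X_mul (M : R⟦X⟧) : HasSubst (X * M) := .of_constantCoeff_zero' (by simp)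

/-- The chain rule for `N ∘ (X·M) = M`; this is `G'(K(z))·K'(z) = 1` in the variable `w = 1/z`. -/
theorem subst_sub_X_mul_derivative_mul_derivative {N M : R⟦X⟧} (hN : N.subst (X * M) = M) :
    (N - X * d⁄dX R N).subst (X * M) * d⁄dX R (X * M) = M ^ 2 := by
  have hs := hasSubst_X_mul M
  rw [subst_sub hs, subst_mul hs, subst_X hs, hN, sub_mul, mul_assoc, ← derivative_subst hs, hN,
    Derivation.leibniz, derivative_X, smul_eq_mul, smul_eq_mul]
  ring

theorem subst_X_mul_inv_eq_X {K : Type*} [Field K] {N M : K⟦X⟧} (hN0 : constantCoeff N ≠ 0)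
    (hN : N.subst (X * M) = M) : (X * N⁻¹).subst (X * M) = X := by
  have hs := hasSubst_X_mul M
  have hinv : M * N⁻¹.subst (X * M) = 1 :=
    calc M * N⁻¹.subst (X * M) = (N * N⁻¹).subst (X * M) := by rw [subst_mul hs, hN]
      _ = 1 := by rw [PowerSeries.mul_inv_cancel _ hN0, subst_one hs]
  rw [subst_mul hs, subst_X hs, mul_assoc, hinv, mul_one]

end PowerSeries

theorem eq_mul_iff_sq_mul_eq {A : Type*} [CommRing A] [IsDomain A] {x M n D g ρ : A}
    (hx : x ≠ 0) (hM : M ≠ 0) (h : n * D = M ^ 2) :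
    g = ρ * D ↔ (x * M) ^ 2 * ρ = x ^ 2 * g * n := by
  have hn : n ≠ 0 := by
    rintro rfl
    exact pow_ne_zero 2 hM (by rw [← h, zero_mul])
  calc g = ρ * D ↔ x ^ 2 * (n * g) = x ^ 2 * (n * (ρ * D)) := by
        rw [mul_right_inj' (pow_ne_zero 2 hx), mul_right_inj' hn]
    _ ↔ (x * M) ^ 2 * ρ = x ^ 2 * g * n := by
        rw [mul_pow, ← h]
        constructor <;> intro e <;> linear_combination -e

open PowerSeries

theorem psComp_eq_subst {f a : ℝ⟦X⟧} (ha : constantCoeff a = 0) : psComp f a = f.subst a := by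
  ext n
  rw [psComp, coeff_mk, coeff_subst' (.of_constantCoeff_zero' ha)]
  refine (finsum_eq_sum_of_support_subset _ fun k hk => ?_).symm
  by_contra hkn
  simp only [Finset.coe_range, Set.mem_Iio, not_lt] at hkn
  refine hk ?_
  dsimp only
  rw [coeff_of_lt_order n ((le_order_pow_of_constantCoeff_eq_zero k ha).trans_lt' _), mul_zero]
  exact_mod_cast hkn

@[simp]
theorem constantCoeff_Mser (m : ℕ → ℝ) : constantCoeff (Mser m) = 1 := by
  simp [Mser, ← coeff_zero_eq_constantCoeff_apply]

@[simp]
theorem constantCoeff_Nser (r : ℕ → ℝ) : constantCoeff (Nser r) = 1 := by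
  simp [Nser, ← coeff_zero_eq_constantCoeff_apply]

theorem Nser_eq_one_add_Rser (r : ℕ → ℝ) : Nser r = 1 + Rser r := by
  ext n
  by_cases h : n = 0 <;> simp [Nser, Rser, coeff_one, h]

theorem N2ser_eq_sub_X_mul_derivative (r : ℕ → ℝ) : N2ser r = Nser r - X * d⁄dX ℝ (Nser r) := by
  ext (_ | n)
  · simp [N2ser, Nser]
  · simp [N2ser, Nser, coeff_succ_X_mul, coeff_derivative]
    ring

theorem Dser_eq_derivative_X_mul (m : ℕ → ℝ) : Dser m = d⁄dX ℝ (X * Mser m) := by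
  rw [Derivation.leibniz, derivative_X, smul_eq_mul, smul_eq_mul, mul_one]
  ext (_ | n)
  · simp [Dser, Mser]
  · simp [Dser, Mser, coeff_succ_X_mul, coeff_derivative]
    ring

theorem Ghat_eq_X_sq_mul (m' : ℕ → ℝ) : Ghat m' = X ^ 2 * M'ser m' := by
  ext n
  rw [mul_comm, coeff_mul_X_pow', Ghat, M'ser, coeff_mk]
  split_ifs <;> first | rfl | omega | (rw [coeff_mk]; congr 1; omega)

/-- Proposition 2.2, (1') ⟺ (2'): if `G(K(z)) = z` (encoded as `M = 1 + R̂(w·M)`),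
then the functional relation `g(z) = −r(G(z))·G'(z)` (encoded as
`∑ m'_{k+1} w^k = r(wM) · ∑ (k+1) m_k w^k` with `w = 1/z`) holds if and only if
the functional relation `r(z) = −g(K(z))·K'(z)` holds; the latter, using
`K = N/z`, `K' = −z⁻²N₂` and `1/K = z·N⁻¹`, is encoded as
`z²·r(z) = ĝ(z·N⁻¹)·N₂`. -/
theorem infinitesimal_relations_equivalent (m r m' r' : ℕ → ℝ)
    (hGK : Mser m = 1 + psComp (Rser r) (PowerSeries.X * Mser m)) :
    (M'ser m' = psComp (R'ser r') (PowerSeries.X * Mser m) * Dser m) ↔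
      (PowerSeries.X ^ 2 * R'ser r'
        = psComp (Ghat m') (PowerSeries.X * (Nser r)⁻¹) * N2ser r) := by
  set φ : ℝ⟦X⟧ := X * Mser m
  have hφ : HasSubst φ := hasSubst_X_mul _
  rw [psComp_eq_subst (by simp [φ])] at hGK ⊢
  rw [psComp_eq_subst (by simp)]
  have hNφ : (Nser r).subst φ = Mser m := by
    rw [Nser_eq_one_add_Rser, subst_add hφ, subst_one hφ, ← hGK]
  have hkey : (N2ser r).subst φ * Dser m = Mser m ^ 2 := by
    rw [N2ser_eq_sub_X_mul_derivative, Dser_eq_derivative_X_mul]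
    exact subst_sub_X_mul_derivative_mul_derivative hNφ
  refine Iff.trans ?_ (subst_injective (P := φ) (by simp [φ]) (by simp [φ])).eq_iff
  rw [subst_mul hφ, subst_mul hφ, subst_pow hφ, subst_X hφ,
    subst_comp_subst_apply (hasSubst_X_mul _) hφ, subst_X_mul_inv_eq_X (by simp) hNφ, X_subst,
    Ghat_eq_X_sq_mul]
  exact eq_mul_iff_sq_mul_eq X_ne_zero (ne_zero_of_map (f := constantCoeff) (by simp)) hkey
end

section
/- The Möbius function of the non-crossing partition lattice NC(n) satisfies Möb_NC(0_n, π) = (−1)^{n−|π|} Π_{V ∈ π} C_{|V|−1}, where C_k = (1/(k+1))·C(2k,k) is the k-th Catalan number. -/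
open Finset

def Finpartition.IsNonCrossing {n : ℕ}
    (π : Finpartition (Finset.univ : Finset (Fin n))) : Prop :=
  ∀ a b c d : Fin n, a < b → b < c → c < d →
    ∀ B₁ ∈ π.parts, ∀ B₂ ∈ π.parts, a ∈ B₁ → c ∈ B₁ → b ∈ B₂ → d ∈ B₂ → B₁ = B₂

/-!
Put `w(τ) = ∏_{V ∈ τ} (-1)^(|V|-1) C_(|V|-1)`. The Möbius function is determined by
`∑_{σ ≤ π} μ(0, σ) = [π = 0]`, so it suffices to show `∑_{τ ≤ P} w(τ) = [P = 0]` for every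
noncrossing partition `P` of a finite chain `S`, the sum running over noncrossing `τ`.

Sort the `τ` by their block `B` through `a = min S`. The other blocks of `τ` lie in gaps of `B`,
so deleting `B` identifies these `τ` with the noncrossing partitions of `S \ B` refining the
blocks of `P` cut along the gaps of `B`. By induction on `|S|` the sum becomes
`∑_B w(B) [P cut along B is discrete]`. This vanishes unless every block of `P` other than
`V ∋ a` is a singleton, and then it runs over the `B ⊆ V` through `a` whose gaps contain at most
one point of `V`; there are `[x^|V|] (x + x²)^k` of these with `|B| = k`. Finally
`g(x) = x C(-x) = ∑ (-1)^(k-1) C_(k-1) x^k` satisfies `g + g² = x`, i.e. `g(x + x²) = x`, so the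
sum is `[|V| = 1] = [P = 0]`.
-/

open PowerSeries

namespace PowerSeries

section CommSemiring

variable {R : Type*} [CommSemiring R]

lemma coeff_X_add_X_sq_pow_of_lt {m k : ℕ} (h : m < k) :
    coeff m ((X + X ^ 2 : R⟦X⟧) ^ k) = 0 := by
  rw [show (X + X ^ 2 : R⟦X⟧) ^ k = X ^ k * (1 + X) ^ k by rw [← mul_pow]; ring,
    coeff_X_pow_mul', if_neg (by omega)]

lemma coeff_X_add_X_sq_pow_succ (m k : ℕ) :
    coeff (m + 2) ((X + X ^ 2 : R⟦X⟧) ^ (k + 1)) =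
      coeff (m + 1) ((X + X ^ 2 : R⟦X⟧) ^ k) + coeff m ((X + X ^ 2 : R⟦X⟧) ^ k) := by
  rw [pow_succ', add_mul, map_add, coeff_X_pow_mul, show m + 2 = m + 1 + 1 from rfl,
    coeff_succ_X_mul]

lemma sum_coeff_X_add_X_sq_pow_mul_of_le_one {m N : ℕ} (hm : m ≤ 1) (hN : m < N) (f : ℕ → R) :
    ∑ k ∈ range N, coeff m ((X + X ^ 2 : R⟦X⟧) ^ k) * f k = f m := by
  rw [sum_eq_single_of_mem m (mem_range.2 hN) fun k _ hkm => ?_]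
  · interval_cases m <;> simp [coeff_X]
  · rcases lt_or_gt_of_ne hkm with hk | hk
    · obtain ⟨rfl, rfl⟩ : m = 1 ∧ k = 0 := by omega
      simp
    · rw [coeff_X_add_X_sq_pow_of_lt hk, zero_mul]

end CommSemiring

variable {R : Type*} [CommRing R]

lemma coeff_subst_X_add_X_sq (f : R⟦X⟧) {m N : ℕ} (hN : m < N) :
    coeff m (f.subst (X + X ^ 2 : R⟦X⟧)) =
      ∑ k ∈ range N, coeff m ((X + X ^ 2 : R⟦X⟧) ^ k) * coeff k f := by
  rw [coeff_subst' (HasSubst.of_constantCoeff_zero' (by simp)),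
    finsum_eq_sum_of_support_subset _ (s := range N)]
  · simp only [smul_eq_mul, mul_comm]
  · intro k hk
    by_contra hkN
    simp only [coe_range, Set.mem_Iio, not_lt] at hkN
    simp only [Function.mem_support, ne_eq] at hk
    exact hk (by rw [coeff_X_add_X_sq_pow_of_lt (by omega), smul_zero])

variable (R) in
/-- `X C(-X) = ∑_{k ≥ 1} (-1)^(k-1) C_(k-1) X^k`, where `C` is the Catalan series. -/
noncomputable def signedCatalanSeries : R⟦X⟧ :=
  X * rescale (-1) (map (Nat.castRingHom R) catalanSeries)

lemma coeff_succ_signedCatalanSeries (k : ℕ) :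
    coeff (k + 1) (signedCatalanSeries R) = (-1) ^ k * catalan k := by
  simp [signedCatalanSeries, coeff_succ_X_mul, coeff_rescale]

lemma constantCoeff_signedCatalanSeries : constantCoeff (signedCatalanSeries R) = 0 := by
  simp [signedCatalanSeries]

lemma signedCatalanSeries_add_sq : signedCatalanSeries R + signedCatalanSeries R ^ 2 = X := by
  have h := congrArg (fun f => rescale (-1 : R) (map (Nat.castRingHom R) f))
    catalanSeries_sq_mul_X_add_one
  simp only [map_add, map_mul, map_pow, map_X, map_one, rescale_X, map_neg] at h
  simp only [signedCatalanSeries]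
  linear_combination (-X : R⟦X⟧) * h

theorem subst_X_add_X_sq_signedCatalanSeries :
    (signedCatalanSeries R).subst (X + X ^ 2 : R⟦X⟧) = (X : R⟦X⟧) := by
  have hX : constantCoeff (X + X ^ 2 : R⟦X⟧) = 0 := by simp
  have hs : HasSubst (X + X ^ 2 : R⟦X⟧) := HasSubst.of_constantCoeff_zero' hX
  set h : R⟦X⟧ := (signedCatalanSeries R).subst (X + X ^ 2 : R⟦X⟧)
  have hsq : h + h ^ 2 = X + X ^ 2 := by
    rw [← subst_pow hs, ← subst_add hs, signedCatalanSeries_add_sq, subst_X hs]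
  have hunit : IsUnit (h + X + 1) := by
    have h0 : constantCoeff h = 0 :=
      constantCoeff_subst_eq_zero hX _ constantCoeff_signedCatalanSeries
    simp [isUnit_iff_constantCoeff, h0]
  rw [← sub_eq_zero, ← hunit.mul_left_eq_zero]
  linear_combination hsq

end PowerSeries

namespace Finset

variable {α : Type*} [LinearOrder α]

def SameGap (B : Finset α) (x y : α) : Prop :=
  ∀ e ∈ B, e < x ↔ e < y

theorem SameGap.symm {B : Finset α} {x y : α} (h : B.SameGap x y) : B.SameGap y x :=
  fun e he => (h e he).symm

theorem sameGap_iff_not_exists_between {B : Finset α} {x y : α} (hxy : x < y) (hx : x ∉ B) :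
    B.SameGap x y ↔ ¬ ∃ b ∈ B, x < b ∧ b < y := by
  refine ⟨fun h ⟨b, hb, hxb, hby⟩ => hxb.not_gt ((h b hb).2 hby), fun h e he =>
    ⟨fun hex => hex.trans hxy, fun hey => ?_⟩⟩
  by_contra hex
  exact h ⟨e, he, lt_of_le_of_ne (not_lt.1 hex) (by rintro rfl; exact hx he), hey⟩

def IsSeparating (V B : Finset α) : Prop :=
  B ⊆ V ∧ ∀ x ∈ V \ B, (∃ b ∈ B, b < x) ∧ ∀ y ∈ V \ B, x < y → ∃ b ∈ B, x < b ∧ b < y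

lemma IsSeparating.mem_of_forall_le {V B : Finset α} {v : α} (h : IsSeparating V B) (hv : v ∈ V)
    (hmin : ∀ x ∈ V, v ≤ x) : v ∈ B := by
  by_contra hvB
  obtain ⟨b, hb, hbv⟩ := (h.2 v (mem_sdiff.2 ⟨hv, hvB⟩)).1
  exact (hmin b (h.1 hb)).not_gt hbv

lemma isSeparating_insert_insert_iff {v : α} {V B : Finset α} (hv : ∀ x ∈ V, v < x)
    (hB : B ⊆ V) :
    IsSeparating (insert v V) (insert v B) ↔
      ∀ x ∈ V \ B, ∀ y ∈ V \ B, x < y → ∃ b ∈ B, x < b ∧ b < y := by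
  have hvV : v ∉ V := fun h => (hv v h).false
  rw [IsSeparating, insert_sdiff_insert, sdiff_insert_of_notMem hvV]
  refine ⟨fun h x hx y hy hxy => ?_, fun h => ⟨insert_subset_insert v hB, fun x hx => ?_⟩⟩
  · obtain ⟨b, hb, hxb, hby⟩ := (h.2 x hx).2 y hy hxy
    rcases mem_insert.1 hb with rfl | hb
    · exact absurd hxb (hv x (mem_sdiff.1 hx).1).not_gt
    · exact ⟨b, hb, hxb, hby⟩
  · refine ⟨⟨v, mem_insert_self v B, hv x (mem_sdiff.1 hx).1⟩, fun y hy hxy => ?_⟩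
    obtain ⟨b, hb, hxb⟩ := h x hx y hy hxy
    exact ⟨b, mem_insert_of_mem hb, hxb⟩

lemma isSeparating_insert_insert_insert_iff {v w : α} {W B : Finset α} (hvw : v < w)
    (hw : ∀ x ∈ W, w < x) (hB : B ⊆ W) :
    IsSeparating (insert v (insert w W)) (insert v B) ↔ IsSeparating W B := by
  have hv : ∀ x ∈ insert w W, v < x := by
    simpa [hvw] using fun x hx => hvw.trans (hw x hx)
  have hwB : w ∉ B := fun h => (hw w (hB h)).false
  rw [isSeparating_insert_insert_iff hv (hB.trans (subset_insert w W)),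
    insert_sdiff_of_notMem _ hwB]
  refine ⟨fun h => ⟨hB, fun x hx => ⟨?_, fun y hy hxy => h x (mem_insert_of_mem hx) y
    (mem_insert_of_mem hy) hxy⟩⟩, fun h x hx y hy hxy => ?_⟩
  · obtain ⟨b, hb, -, hbx⟩ :=
      h w (mem_insert_self w _) x (mem_insert_of_mem hx) (hw x (mem_sdiff.1 hx).1)
    exact ⟨b, hb, hbx⟩
  · rcases mem_insert.1 hy with rfl | hyW
    · rcases mem_insert.1 hx with rfl | hxW
      · exact absurd hxy (lt_irrefl _)
      · exact absurd hxy (hw x (mem_sdiff.1 hxW).1).not_gt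
    rcases mem_insert.1 hx with rfl | hxW
    · obtain ⟨b, hb, hby⟩ := (h.2 y hyW).1
      exact ⟨b, hb, hw b (hB hb), hby⟩
    · exact (h.2 x hxW).2 y hyW hxy

lemma isSeparating_insert_insert_insert_insert_iff {v w : α} {W B : Finset α} (hvw : v < w)
    (hw : ∀ x ∈ W, w < x) (hB : B ⊆ W) :
    IsSeparating (insert v (insert w W)) (insert v (insert w B)) ↔
      IsSeparating (insert w W) (insert w B) := by
  have hv : ∀ x ∈ insert w W, v < x := by
    simpa [hvw] using fun x hx => hvw.trans (hw x hx)
  have hwW : w ∉ W := fun h => (hw w h).false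
  rw [isSeparating_insert_insert_iff hv (insert_subset_insert w hB),
    isSeparating_insert_insert_iff hw hB, insert_sdiff_insert, sdiff_insert_of_notMem hwW]
  refine forall₄_congr fun x hx y _ => imp_congr_right fun _ => ⟨?_, ?_⟩
  · rintro ⟨b, hb, hxb⟩
    rcases mem_insert.1 hb with rfl | hb
    · exact absurd hxb.1 (hw x (mem_sdiff.1 hx).1).not_gt
    · exact ⟨b, hb, hxb⟩
  · rintro ⟨b, hb, hxb⟩
    exact ⟨b, mem_insert_of_mem hb, hxb⟩

section Sum

open scoped Classical

lemma sum_isSeparating_insert_insert {M : Type*} [AddCommMonoid M] (f : ℕ → M) {v w : α}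
    {W : Finset α} (hvw : v < w) (hw : ∀ x ∈ W, w < x) :
    ∑ B ∈ (insert v (insert w W)).powerset with IsSeparating (insert v (insert w W)) B, f #B =
      ∑ B ∈ (insert w W).powerset with IsSeparating (insert w W) B, f (#B + 1) +
        ∑ B ∈ W.powerset with IsSeparating W B, f (#B + 1) := by
  have hwW : w ∉ W := fun h => (hw w h).false
  have hvW : v ∉ insert w W := by
    simpa [hvw.ne] using fun h => (hvw.trans (hw v h)).false
  have hv : ∀ x ∈ insert v (insert w W), v ≤ x := by
    simpa using ⟨hvw.le, fun x hx => (hvw.trans (hw x hx)).le⟩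
  have hw' : ∀ x ∈ insert w W, w ≤ x := by
    simpa using fun x hx => (hw x hx).le
  have hnotv : ∀ B ∈ (insert w W).powerset, ¬ IsSeparating (insert v (insert w W)) B :=
    fun B hB h => hvW (mem_powerset.1 hB (h.mem_of_forall_le (mem_insert_self v _) hv))
  have hnotw : ∀ B ∈ W.powerset, ¬ IsSeparating (insert w W) B := fun B hB h =>
    hwW (mem_powerset.1 hB (h.mem_of_forall_le (mem_insert_self w W) hw'))
  simp only [sum_filter]
  rw [sum_powerset_insert hvW, sum_powerset_insert hwW, sum_powerset_insert hwW,
    sum_powerset_insert hwW,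
    sum_eq_zero fun B hB => if_neg (hnotv B (mem_powerset.2
      ((mem_powerset.1 hB).trans (subset_insert w W)))),
    sum_eq_zero fun B hB => if_neg (hnotv _ (mem_powerset.2
      (insert_subset_insert w (mem_powerset.1 hB)))),
    sum_eq_zero fun B hB => if_neg (hnotw B hB), zero_add, zero_add, zero_add, add_comm]
  congr 1 <;> refine sum_congr rfl fun B hB => ?_ <;> have hB := mem_powerset.1 hB
  · have hvB : v ∉ insert w B := fun h => hvW (insert_subset_insert w hB h)
    rw [isSeparating_insert_insert_insert_insert_iff hvw hw hB, card_insert_of_notMem hvB]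
  · have hvB : v ∉ B := fun h => hvW (mem_insert_of_mem (hB h))
    rw [isSeparating_insert_insert_insert_iff hvw hw hB, card_insert_of_notMem hvB]

/-- Each point of `B` is followed in `V` by at most one point of `V \ B`: one factor `X + X²`
per point of `B`. -/
theorem sum_isSeparating {R : Type*} [CommSemiring R] (V : Finset α) (f : ℕ → R) {N : ℕ}
    (hN : #V < N) :
    ∑ B ∈ V.powerset with IsSeparating V B, f #B =
      ∑ k ∈ range N, coeff #V ((X + X ^ 2 : R⟦X⟧) ^ k) * f k := by
  suffices key : ∀ V : Finset α,
      (∀ (f : ℕ → R) (N : ℕ), #V < N → ∑ B ∈ V.powerset with IsSeparating V B, f #B =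
        ∑ k ∈ range N, coeff #V ((X + X ^ 2 : R⟦X⟧) ^ k) * f k) ∧
      ∀ v, (∀ x ∈ V, v < x) → ∀ (f : ℕ → R) (N : ℕ), #(insert v V) < N →
        ∑ B ∈ (insert v V).powerset with IsSeparating (insert v V) B, f #B =
          ∑ k ∈ range N, coeff #(insert v V) ((X + X ^ 2 : R⟦X⟧) ^ k) * f k from
    (key V).1 f N hN
  intro V
  induction V using Finset.induction_on_min with
  | empty =>
    refine ⟨fun f N hN => ?_, fun v _ f N hN => ?_⟩
    · rw [card_empty] at hN ⊢
      rw [sum_coeff_X_add_X_sq_pow_mul_of_le_one zero_le_one hN]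
      simp [IsSeparating, filter_singleton]
    · rw [insert_empty, card_singleton] at hN ⊢
      rw [sum_coeff_X_add_X_sq_pow_mul_of_le_one le_rfl hN, ← insert_empty, sum_filter,
        sum_powerset_insert (notMem_empty v)]
      simp [IsSeparating]
  | insert w W hw ih =>
    have hwW : w ∉ W := fun h => (hw w h).false
    refine ⟨ih.2 w hw, fun v hv f N hN => ?_⟩
    have hvW : v ∉ insert w W := fun h => (hv v h).false
    obtain ⟨N, rfl⟩ : ∃ N', N = N' + 1 := ⟨N - 1, by omega⟩
    rw [card_insert_of_notMem hvW, card_insert_of_notMem hwW] at hN ⊢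
    have hW := ih.1 (fun k => f (k + 1)) N (by omega)
    have hwW' := ih.2 w hw (fun k => f (k + 1)) N (by rw [card_insert_of_notMem hwW]; omega)
    rw [card_insert_of_notMem hwW] at hwW'
    rw [sum_isSeparating_insert_insert f (hv w (mem_insert_self w W)) hw, hW, hwW',
      sum_range_succ']
    simp [coeff_X_add_X_sq_pow_succ, add_mul, sum_add_distrib]

theorem sum_isSeparating_coeff_signedCatalanSeries {R : Type*} [CommRing R] (V : Finset α) :
    ∑ B ∈ V.powerset with IsSeparating V B, coeff #B (signedCatalanSeries R) =
      if #V = 1 then 1 else 0 := by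
  rw [← coeff_X (R := R), ← subst_X_add_X_sq_signedCatalanSeries (R := R),
    coeff_subst_X_add_X_sq (signedCatalanSeries R) (Nat.lt_succ_self #V)]
  exact sum_isSeparating V (fun k => coeff k (signedCatalanSeries R)) (Nat.lt_succ_self #V)

end Sum

end Finset

namespace Finpartition

section General

variable {α : Type*} [DecidableEq α] {S : Finset α}

theorem eq_bot_iff_forall_card_le_one {P : Finpartition S} : P = ⊥ ↔ ∀ t ∈ P.parts, #t ≤ 1 := by
  refine ⟨?_, fun h => le_bot_iff.1 fun t ht => ?_⟩
  · rintro rfl t ht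
    obtain ⟨a, -, rfl⟩ := mem_bot_iff.1 ht
    simp
  · obtain ⟨x, hx⟩ := P.nonempty_of_mem_parts ht
    obtain rfl : t = {x} :=
      eq_singleton_iff_unique_mem.2 ⟨hx, fun y hy => card_le_one.1 (h t ht) y hy x hx⟩
    exact ⟨{x}, mem_bot_iff.2 ⟨x, P.le ht hx, rfl⟩, le_rfl⟩

theorem le_ofSetSetoid_iff {s : Setoid α} [DecidableRel s] {P : Finpartition S} :
    P ≤ ofSetSetoid s S ↔ ∀ t ∈ P.parts, ∀ a ∈ t, ∀ b ∈ t, s a b := by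
  refine ⟨fun h t ht a ha b hb => ?_, fun h t ht => ?_⟩
  · obtain ⟨c, hc, htc⟩ := h ht
    rw [ofSetSetoid_parts] at hc
    obtain ⟨d, -, rfl⟩ := mem_image.1 hc
    exact s.trans (s.symm (mem_filter.1 (htc ha)).2) (mem_filter.1 (htc hb)).2
  · obtain ⟨a, ha⟩ := P.nonempty_of_mem_parts ht
    exact ⟨_, by rw [ofSetSetoid_parts]; exact mem_image_of_mem _ (P.le ht ha),
      fun b hb => mem_filter.2 ⟨P.le ht hb, h t ht a ha b hb⟩⟩

theorem ofSetSetoid_eq_bot_iff {s : Setoid α} [DecidableRel s] :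
    ofSetSetoid s S = ⊥ ↔ ∀ a ∈ S, ∀ b ∈ S, s a b → a = b := by
  simp only [eq_bot_iff_forall_card_le_one, ofSetSetoid_parts, forall_mem_image, card_le_one,
    mem_filter]
  exact ⟨fun h a ha b hb hab => h ha a ⟨ha, s.refl a⟩ b ⟨hb, hab⟩,
    fun h a _ b hb c hc => h b hb.1 c hc.1 (s.trans (s.symm hb.2) hc.2)⟩

theorem avoid_parts_of_mem {P : Finpartition S} {B : Finset α} (hB : B ∈ P.parts) :
    (P.avoid B).parts = P.parts.erase B := by
  have hdisj : ∀ t ∈ P.parts, t ≠ B → Disjoint t B := fun t ht htB => P.disjoint ht hB htB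
  have hle : ∀ t ∈ P.parts, t ≠ B → ¬ t ≤ B := fun t ht htB h =>
    P.ne_bot ht ((hdisj t ht htB).eq_bot_of_le h)
  ext t
  rw [mem_avoid, mem_erase]
  constructor
  · rintro ⟨d, hd, hdB, rfl⟩
    have hdB' : d ≠ B := by rintro rfl; exact hdB le_rfl
    rw [sdiff_eq_self_of_disjoint (hdisj d hd hdB')]
    exact ⟨hdB', hd⟩
  · rintro ⟨htB, ht⟩
    exact ⟨t, ht, hle t ht htB, sdiff_eq_self_of_disjoint (hdisj t ht htB)⟩

end General

variable {α : Type*} [LinearOrder α] {S T : Finset α}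

def Noncrossing (P : Finpartition S) : Prop :=
  ∀ a b c d : α, a < b → b < c → c < d →
    ∀ B₁ ∈ P.parts, ∀ B₂ ∈ P.parts, a ∈ B₁ → c ∈ B₁ → b ∈ B₂ → d ∈ B₂ → B₁ = B₂

theorem noncrossing_bot : (⊥ : Finpartition S).Noncrossing := by
  intro a b c d hab hbc _ B₁ h₁ _ _ ha hc _ _
  obtain ⟨x, -, rfl⟩ := mem_bot_iff.1 h₁
  rw [mem_singleton] at ha hc
  subst ha hc
  exact absurd (hab.trans hbc) (lt_irrefl _)

theorem Noncrossing.of_parts_subset {P : Finpartition S} {Q : Finpartition T}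
    (hP : P.Noncrossing) (h : Q.parts ⊆ P.parts) : Q.Noncrossing :=
  fun a b c d hab hbc hcd B₁ h₁ B₂ h₂ => hP a b c d hab hbc hcd B₁ (h h₁) B₂ (h h₂)

theorem Noncrossing.sameGap {P : Finpartition S} (hP : P.Noncrossing) {B D : Finset α}
    (hB : B ∈ P.parts) (hD : D ∈ P.parts) (hDB : D ≠ B) {a : α} (haB : a ∈ B)
    (ha : ∀ y ∈ S, a ≤ y) {x y : α} (hx : x ∈ D) (hy : y ∈ D) : B.SameGap x y := by
  have key : ∀ e ∈ B, ∀ x ∈ D, ∀ y ∈ D, e < y → e < x := by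
    intro e he x hx y hy hey
    by_contra hxe
    have hne : ∀ z ∈ B, z ≠ x := by
      rintro z hz rfl
      exact hDB (P.eq_of_mem_parts hD hB hx hz)
    have hxe : x < e := lt_of_le_of_ne (not_lt.1 hxe) (hne e he).symm
    have hax : a < x := lt_of_le_of_ne (ha x (P.le hD hx)) (hne a haB)
    exact hDB (hP a x e y hax hxe hey B hB D hD haB he hx hy).symm
  exact fun e he => ⟨key e he y hy x hx, key e he x hx y hy⟩

theorem Noncrossing.extend {P : Finpartition T} (hP : P.Noncrossing) {B : Finset α}
    (hB : B ≠ ⊥) (hTB : Disjoint T B) (hS : T ⊔ B = S)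
    (hgap : ∀ D ∈ P.parts, ∀ x ∈ D, ∀ y ∈ D, B.SameGap x y) :
    (P.extend hB hTB hS).Noncrossing := by
  intro p₁ p₂ p₃ p₄ h₁₂ h₂₃ h₃₄ X hX Y hY hp₁ hp₃ hp₂ hp₄
  rw [extend_parts, mem_insert] at hX hY
  rcases hX with rfl | hX <;> rcases hY with rfl | hY
  · rfl
  · exact absurd ((hgap Y hY p₂ hp₂ p₄ hp₄ p₃ hp₃).2 h₃₄) h₂₃.not_gt
  · exact absurd ((hgap X hX p₁ hp₁ p₃ hp₃ p₂ hp₂).2 h₂₃) h₁₂.not_gt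
  · exact hP p₁ p₂ p₃ p₄ h₁₂ h₂₃ h₃₄ X hX Y hY hp₁ hp₃ hp₂ hp₄

open scoped Classical in
/-- The blocks of `P` cut along the gaps of `B`, as a partition of `S \ B`: the key
`B.filter (· < x)` records the gap of `B` containing `x`. -/
noncomputable def gapRestrict (P : Finpartition S) (B : Finset α) : Finpartition (S \ B) :=
  ofSetSetoid (Setoid.ker fun x => (P.part x, B.filter (· < x))) (S \ B)

section GapRestrict

variable {P : Finpartition S} {B : Finset α}

theorem mem_part_gapRestrict_iff {x y : α} :
    y ∈ (P.gapRestrict B).part x ↔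
      x ∈ S \ B ∧ y ∈ S \ B ∧ P.part x = P.part y ∧ B.SameGap x y := by
  simp only [gapRestrict, mem_part_ofSetSetoid_iff_rel, Setoid.ker_def, Prod.ext_iff,
    filter_inj', SameGap]

theorem le_gapRestrict_iff {τ : Finpartition (S \ B)} :
    τ ≤ P.gapRestrict B ↔
      ∀ D ∈ τ.parts, ∀ x ∈ D, ∀ y ∈ D, P.part x = P.part y ∧ B.SameGap x y := by
  simp only [gapRestrict, le_ofSetSetoid_iff, Setoid.ker_def, Prod.ext_iff, filter_inj', SameGap]

theorem gapRestrict_eq_bot_iff_forall :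
    P.gapRestrict B = ⊥ ↔
      ∀ x ∈ S \ B, ∀ y ∈ S \ B, P.part x = P.part y → B.SameGap x y → x = y := by
  simp only [gapRestrict, ofSetSetoid_eq_bot_iff, Setoid.ker_def, Prod.ext_iff, filter_inj',
    and_imp, SameGap]

theorem Noncrossing.gapRestrict (hP : P.Noncrossing) (B : Finset α) :
    (P.gapRestrict B).Noncrossing := by
  intro p₁ p₂ p₃ p₄ h₁₂ h₂₃ h₃₄ X hX Y hY hp₁ hp₃ hp₂ hp₄
  rw [← (P.gapRestrict B).part_eq_of_mem hX hp₁] at hp₃ ⊢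
  rw [← (P.gapRestrict B).part_eq_of_mem hY hp₂] at hp₄ ⊢
  obtain ⟨hp₁S, hp₃S, h₁₃, hgap₁₃⟩ := mem_part_gapRestrict_iff.1 hp₃
  obtain ⟨hp₂S, hp₄S, h₂₄, -⟩ := mem_part_gapRestrict_iff.1 hp₄
  have hS : ∀ {x}, x ∈ S \ B → x ∈ S := fun hx => (mem_sdiff.1 hx).1
  have h₁₂' : P.part p₁ = P.part p₂ :=
    hP p₁ p₂ p₃ p₄ h₁₂ h₂₃ h₃₄ _ (P.part_mem.2 (hS hp₁S)) _ (P.part_mem.2 (hS hp₂S))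
      (P.mem_part (hS hp₁S)) (h₁₃ ▸ P.mem_part (hS hp₃S)) (P.mem_part (hS hp₂S))
      (h₂₄ ▸ P.mem_part (hS hp₄S))
  have hgap₁₂ : B.SameGap p₁ p₂ := fun e he =>
    ⟨fun h => h.trans h₁₂, fun h => (hgap₁₃ e he).2 (h.trans h₂₃)⟩
  exact ((P.gapRestrict B).part_eq_of_mem ((P.gapRestrict B).part_mem.2 hp₁S)
    (mem_part_gapRestrict_iff.2 ⟨hp₁S, hp₂S, h₁₂', hgap₁₂⟩)).symm

variable {a : α}

theorem gapRestrict_eq_bot_iff (hP : P.Noncrossing) (haS : a ∈ S) (ha : ∀ y ∈ S, a ≤ y)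
    (haB : a ∈ B) (hBV : B ⊆ P.part a) :
    P.gapRestrict B = ⊥ ↔
      (∀ W ∈ P.parts, W ≠ P.part a → #W ≤ 1) ∧ (P.part a).IsSeparating B := by
  have hV := P.part_mem.2 haS
  have hVS : ∀ {z}, z ∈ P.part a \ B → z ∈ S \ B := fun hz =>
    mem_sdiff.2 ⟨P.part_subset a (mem_sdiff.1 hz).1, (mem_sdiff.1 hz).2⟩
  rw [gapRestrict_eq_bot_iff_forall]
  constructor
  · intro h
    refine ⟨fun W hW hWV => card_le_one.2 fun x hx y hy => ?_, hBV, fun x hx => ⟨?_, ?_⟩⟩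
    · have hWB : ∀ z ∈ W, z ∈ S \ B := fun z hz => mem_sdiff.2 ⟨P.le hW hz,
        fun hzB => hWV (P.eq_of_mem_parts hW hV hz (hBV hzB))⟩
      exact h x (hWB x hx) y (hWB y hy) (by rw [P.part_eq_of_mem hW hx, P.part_eq_of_mem hW hy])
        fun e he => hP.sameGap hV hW hWV (P.mem_part haS) ha hx hy e (hBV he)
    · obtain ⟨hxV, hxB⟩ := mem_sdiff.1 hx
      exact ⟨a, haB, lt_of_le_of_ne (ha x (P.part_subset a hxV)) (by rintro rfl; exact hxB haB)⟩
    · intro y hy hxy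
      by_contra hno
      refine hxy.ne (h x (hVS hx) y (hVS hy) ?_
        ((sameGap_iff_not_exists_between hxy (mem_sdiff.1 hx).2).2 hno))
      rw [P.part_eq_of_mem hV (mem_sdiff.1 hx).1, P.part_eq_of_mem hV (mem_sdiff.1 hy).1]
  · rintro ⟨hW, -, hsep⟩ x hx y hy hxy hgap
    by_cases hxV : P.part x = P.part a
    · have hmemV : ∀ z ∈ S \ B, P.part z = P.part a → z ∈ P.part a \ B := fun z hz hzV =>
        mem_sdiff.2 ⟨hzV ▸ P.mem_part (mem_sdiff.1 hz).1, (mem_sdiff.1 hz).2⟩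
      have hx' := hmemV x hx hxV
      have hy' := hmemV y hy (hxy ▸ hxV)
      by_contra hne
      rcases lt_or_gt_of_ne hne with hlt | hlt
      · exact (sameGap_iff_not_exists_between hlt (mem_sdiff.1 hx).2).1 hgap
          ((hsep x hx').2 y hy' hlt)
      · exact (sameGap_iff_not_exists_between hlt (mem_sdiff.1 hy).2).1 hgap.symm
          ((hsep y hy').2 x hx' hlt)
    · exact card_le_one.1 (hW _ (P.part_mem.2 (mem_sdiff.1 hx).1) hxV) x
        (P.mem_part (mem_sdiff.1 hx).1) y (hxy ▸ P.mem_part (mem_sdiff.1 hy).1)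

theorem avoid_le_gapRestrict {τ : Finpartition S} (hτ : τ.Noncrossing) (hτP : τ ≤ P)
    (hB : B ∈ τ.parts) (haB : a ∈ B) (ha : ∀ y ∈ S, a ≤ y) : τ.avoid B ≤ P.gapRestrict B := by
  rw [le_gapRestrict_iff]
  intro D hD x hx y hy
  rw [avoid_parts_of_mem hB, mem_erase] at hD
  obtain ⟨C, hC, hDC⟩ := hτP hD.2
  exact ⟨by rw [P.part_eq_of_mem hC (hDC hx), P.part_eq_of_mem hC (hDC hy)],
    hτ.sameGap hB hD.2 hD.1 haB ha hx hy⟩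

theorem extend_le_of_le_gapRestrict {τ : Finpartition (S \ B)} (hτ : τ ≤ P.gapRestrict B)
    {V : Finset α} (hV : V ∈ P.parts) (hBV : B ⊆ V) (hB : B ≠ ⊥) (hS : S \ B ⊔ B = S) :
    τ.extend hB sdiff_disjoint hS ≤ P := by
  intro D hD
  rw [extend_parts, mem_insert] at hD
  rcases hD with rfl | hD
  · exact ⟨V, hV, hBV⟩
  · have hDS : ∀ {x}, x ∈ D → x ∈ S := fun hx => (mem_sdiff.1 (τ.le hD hx)).1
    obtain ⟨x, hx⟩ := τ.nonempty_of_mem_parts hD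
    refine ⟨P.part x, P.part_mem.2 (hDS hx), fun y hy => ?_⟩
    rw [(le_gapRestrict_iff.1 hτ D hD x hx y hy).1]
    exact P.mem_part (hDS hy)

end GapRestrict

variable (R : Type*) [CommRing R]

noncomputable def catalanWeight (P : Finpartition S) : R :=
  ∏ t ∈ P.parts, coeff #t (signedCatalanSeries R)

theorem catalanWeight_eq (P : Finpartition S) :
    catalanWeight R P = (-1) ^ (#S - #P.parts) * ∏ t ∈ P.parts, (catalan (#t - 1) : R) := by
  have hcard : ∀ t ∈ P.parts, #t - 1 + 1 = #t := fun t ht =>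
    Nat.sub_add_cancel (card_pos.2 (P.nonempty_of_mem_parts ht))
  have hsum : ∑ t ∈ P.parts, (#t - 1) = #S - #P.parts := by
    rw [sum_tsub_distrib _ fun t ht => (hcard t ht).symm ▸ Nat.le_add_left 1 _, P.sum_card_parts,
      ← card_eq_sum_ones]
  calc catalanWeight R P = ∏ t ∈ P.parts, ((-1) ^ (#t - 1) * (catalan (#t - 1) : R)) :=
        prod_congr rfl fun t ht => by rw [← coeff_succ_signedCatalanSeries, hcard t ht]
    _ = _ := by rw [prod_mul_distrib, prod_pow_eq_pow_sum, hsum]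

section BlockOfMin

open scoped Classical

variable {P : Finpartition S} {a : α}

/-- Deleting the block `B` of the minimum `a` is a bijection onto the noncrossing partitions of
`S \ B` below `P.gapRestrict B`, with inverse `extend`. -/
theorem sum_catalanWeight_filter_part_eq {B : Finset α} (haS : a ∈ S) (ha : ∀ y ∈ S, a ≤ y)
    (haB : a ∈ B) (hBV : B ⊆ P.part a) :
    ∑ τ ∈ univ.filter (fun τ : Finpartition S => τ.Noncrossing ∧ τ ≤ P) with τ.part a = B,
        catalanWeight R τ =
      coeff #B (signedCatalanSeries R) *
        ∑ τ ∈ univ.filter (fun τ : Finpartition (S \ B) => τ.Noncrossing ∧ τ ≤ P.gapRestrict B),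
          catalanWeight R τ := by
  have hB : B ≠ ⊥ := ne_empty_of_mem haB
  have hS : S \ B ⊔ B = S := sdiff_union_of_subset (hBV.trans (P.part_subset a))
  have hBext : ∀ τ : Finpartition (S \ B), B ∈ (τ.extend hB sdiff_disjoint hS).parts := fun τ => by
    rw [extend_parts]; exact mem_insert_self B _
  have hBτ : ∀ τ : Finpartition (S \ B), B ∉ τ.parts := fun τ h =>
    (mem_sdiff.1 (τ.le h haB)).2 haB
  have hBpart : ∀ τ : Finpartition S, τ.part a = B → B ∈ τ.parts := fun τ h =>
    h ▸ τ.part_mem.2 haS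
  rw [mul_sum]
  refine sum_nbij' (fun τ => τ.avoid B) (fun τ => τ.extend hB sdiff_disjoint hS) ?_ ?_ ?_ ?_ ?_
  · intro τ hτ
    simp only [mem_filter, mem_univ, true_and] at hτ ⊢
    obtain ⟨⟨hNC, hle⟩, rfl⟩ := hτ
    have hmem := τ.part_mem.2 haS
    exact ⟨hNC.of_parts_subset (by rw [avoid_parts_of_mem hmem]; exact erase_subset _ _),
      avoid_le_gapRestrict hNC hle hmem (τ.mem_part haS) ha⟩
  · intro τ hτ
    simp only [mem_filter, mem_univ, true_and] at hτ ⊢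
    exact ⟨⟨hτ.1.extend hB sdiff_disjoint hS fun D hD x hx y hy =>
        (le_gapRestrict_iff.1 hτ.2 D hD x hx y hy).2,
      extend_le_of_le_gapRestrict hτ.2 (P.part_mem.2 haS) hBV hB hS⟩,
      part_eq_of_mem _ (hBext τ) haB⟩
  · intro τ hτ
    have hmem := hBpart τ (mem_filter.1 hτ).2
    ext1
    rw [extend_parts, avoid_parts_of_mem hmem, insert_erase hmem]
  · intro τ _
    ext1
    rw [avoid_parts_of_mem (hBext τ), extend_parts, erase_insert (hBτ τ)]
  · intro τ hτ
    have hmem := hBpart τ (mem_filter.1 hτ).2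
    rw [catalanWeight, catalanWeight, avoid_parts_of_mem hmem]
    exact (mul_prod_erase _ (fun t => coeff #t (signedCatalanSeries R)) hmem).symm

theorem sum_coeff_mul_ite_gapRestrict_eq_bot (hP : P.Noncrossing) (haS : a ∈ S)
    (ha : ∀ y ∈ S, a ≤ y) :
    ∑ B ∈ (P.part a).powerset with a ∈ B,
        coeff #B (signedCatalanSeries R) * (if P.gapRestrict B = ⊥ then 1 else 0) =
      if P = ⊥ then 1 else 0 := by
  set V := P.part a
  have haV : a ∈ V := P.mem_part haS
  have hbot : P = ⊥ ↔ (∀ W ∈ P.parts, W ≠ V → #W ≤ 1) ∧ #V = 1 := by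
    rw [eq_bot_iff_forall_card_le_one]
    refine ⟨fun h => ⟨fun W hW _ => h W hW,
      le_antisymm (h V (P.part_mem.2 haS)) (card_pos.2 ⟨a, haV⟩)⟩, fun h W hW => ?_⟩
    by_cases hWV : W = V
    · exact hWV ▸ h.2.le
    · exact h.1 W hW hWV
  have hterm : ∀ B ∈ V.powerset.filter (a ∈ ·),
      coeff #B (signedCatalanSeries R) * (if P.gapRestrict B = ⊥ then 1 else 0) =
        if (∀ W ∈ P.parts, W ≠ V → #W ≤ 1) ∧ V.IsSeparating B
          then coeff #B (signedCatalanSeries R) else 0 := by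
    intro B hB
    rw [mem_filter, mem_powerset] at hB
    rw [if_congr (gapRestrict_eq_bot_iff hP haS ha hB.2 hB.1) rfl rfl, mul_ite, mul_one, mul_zero]
  rw [if_congr hbot rfl rfl, ite_and, ← sum_isSeparating_coeff_signedCatalanSeries V,
    sum_congr rfl hterm]
  split_ifs with hC
  · simp only [and_iff_right hC]
    rw [← sum_filter, filter_filter]
    refine sum_congr (filter_congr fun B _ => ⟨fun h => h.2, fun h => ⟨?_, h⟩⟩) fun _ _ => rfl
    exact h.mem_of_forall_le haV fun x hx => ha x (P.part_subset a hx)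
  · simp only [hC, false_and, if_false, sum_const_zero]

theorem sum_catalanWeight_noncrossing_le (P : Finpartition S) (hP : P.Noncrossing) :
    ∑ τ ∈ univ.filter (fun τ : Finpartition S => τ.Noncrossing ∧ τ ≤ P), catalanWeight R τ =
      if P = ⊥ then 1 else 0 := by
  induction S using Finset.strongInduction with
  | H S ih =>
  obtain rfl | hS := S.eq_empty_or_nonempty
  · have hbot : ∀ τ : Finpartition (∅ : Finset α), τ = ⊥ := fun τ =>
      Subsingleton.elim (α := Finpartition (⊥ : Finset α)) τ ⊥
    have hmem : (⊥ : Finpartition (∅ : Finset α)) ∈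
        univ.filter (fun τ : Finpartition ∅ => τ.Noncrossing ∧ τ ≤ P) :=
      mem_filter.2 ⟨mem_univ _, noncrossing_bot, bot_le⟩
    rw [if_pos (hbot P), sum_eq_single_of_mem ⊥ hmem fun τ _ hτ => absurd (hbot τ) hτ]
    simp [catalanWeight]
  set a := S.min' hS
  have haS : a ∈ S := S.min'_mem hS
  have ha : ∀ y ∈ S, a ≤ y := fun y hy => S.min'_le y hy
  have hmaps : ∀ τ ∈ univ.filter (fun τ : Finpartition S => τ.Noncrossing ∧ τ ≤ P),
      τ.part a ∈ (P.part a).powerset.filter (a ∈ ·) := by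
    intro τ hτ
    obtain ⟨C, hC, hτC⟩ := (mem_filter.1 hτ).2.2 (τ.part_mem.2 haS)
    rw [P.part_eq_of_mem hC (hτC (τ.mem_part haS)), mem_filter, mem_powerset]
    exact ⟨hτC, τ.mem_part haS⟩
  rw [← sum_fiberwise_of_maps_to hmaps, ← sum_coeff_mul_ite_gapRestrict_eq_bot R hP haS ha]
  refine sum_congr rfl fun B hB => ?_
  rw [mem_filter, mem_powerset] at hB
  rw [sum_catalanWeight_filter_part_eq R haS ha hB.2 hB.1,
    ih (S \ B) (sdiff_ssubset (hB.1.trans (P.part_subset a)) ⟨a, hB.2⟩) _ (hP.gapRestrict B)]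

end BlockOfMin

end Finpartition

open scoped Classical in
theorem eq_of_forall_sum_filter_le_eq {ι M : Type*} [PartialOrder ι] [Fintype ι]
    [AddCancelCommMonoid M] (p : ι → Prop) {f g : ι → M}
    (h : ∀ i, p i → ∑ j ∈ univ.filter (fun j => p j ∧ j ≤ i), f j =
      ∑ j ∈ univ.filter (fun j => p j ∧ j ≤ i), g j) (i : ι) (hi : p i) : f i = g i := by
  induction i using WellFoundedLT.induction with
  | _ i ih =>
  have hmem : i ∈ univ.filter (fun j => p j ∧ j ≤ i) := mem_filter.2 ⟨mem_univ i, hi, le_rfl⟩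
  have hlt : ∀ j ∈ (univ.filter (fun j => p j ∧ j ≤ i)).erase i, f j = g j := by
    intro j hj
    obtain ⟨hji, hj⟩ := mem_erase.1 hj
    obtain ⟨-, hpj, hj⟩ := mem_filter.1 hj
    exact ih j (lt_of_le_of_ne hj hji) hpj
  have := h i hi
  rw [← add_sum_erase _ _ hmem, ← add_sum_erase _ _ hmem, sum_congr rfl hlt] at this
  exact add_right_cancel this

open scoped Classical in
/-- The Möbius function of the non-crossing partition lattice `NC(n)` (non-crossing
partitions of `{1,…,n}` under reverse refinement, with minimum `0_n = ⊥` the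
all-singletons partition), defined by `∑_{σ ∈ NC(n), σ ≤ π} Möb_NC(0_n, σ) = [π = 0_n]`,
satisfies `Möb_NC(0_n, π) = (−1)^{n−|π|} ∏_{V ∈ π} C_{|V|−1}` where
`C_k = (1/(k+1))·C(2k,k)` is the `k`-th Catalan number. -/
theorem moebius_noncrossing_partition_lattice (n : ℕ)
    (mu : Finpartition (Finset.univ : Finset (Fin n)) → ℝ)
    (hmu : ∀ π : Finpartition (Finset.univ : Finset (Fin n)), π.IsNonCrossing →
      ∑ σ ∈ Finset.univ.filter (fun σ => Finpartition.IsNonCrossing σ ∧ σ ≤ π), mu σ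
        = if π = ⊥ then 1 else 0) :
    ∀ π : Finpartition (Finset.univ : Finset (Fin n)), π.IsNonCrossing →
      mu π = (-1 : ℝ) ^ (n - π.parts.card) *
        ∏ V ∈ π.parts, (catalan (V.card - 1) : ℝ) := by
  intro π hπ
  rw [eq_of_forall_sum_filter_le_eq _ (g := Finpartition.catalanWeight ℝ)
    (fun σ hσ => (hmu σ hσ).trans (Finpartition.sum_catalanWeight_noncrossing_le ℝ σ hσ).symm)
    π hπ, Finpartition.catalanWeight_eq, card_univ, Fintype.card_fin]
end

section
/- A partition π of {1,…,n}, viewed as a permutation whose cycles are the blocks of π in increasing order, is non-crossing if and only if |π| + |π^{-1}γ_n| = n + 1, where γ_n = (1,2,…,n) is the full cycle and |σ| denotes the number of cycles of a permutation σ (including fixed points). -/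
/-!
Write `#σ` for `cycleCount σ` and `γ` for `finRotate n`. Multiplying by a transposition `(a b)`
merges the cycles through `a` and `b` when they differ and splits their common cycle otherwise,
so `#` changes by exactly one. Peeling off transpositions that split cycles of `σ` gives the
triangle inequality `#σ + #τ ≤ n + #(σ τ)`, in particular `#σ + #(σ⁻¹ γ) ≤ n + 1`.

If the cycles of `σ` are increasing and non-crossing and `p < q = σ p`, every cycle meeting the
open interval `(p, q)` stays inside it, so `[p, q)` is a union of cycles of `σ⁻¹ γ`. Removing `q`
from its cycle of `σ` therefore adds a cycle to `σ` and merges two cycles of `σ⁻¹ γ`; induction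
gives equality.

If `a < b < c < d` with `a, c` and `b, d` in two different cycles of `σ`, splitting both gives
`τ = (b d) (a c) σ` with `#τ = #σ + 2`, while `τ σ⁻¹ γ = (b d) (a c) γ` is a single cycle, so the
triangle inequality forces `#σ + #(σ⁻¹ γ) ≤ n - 1`.
-/

open Finset Equiv

/-- The successor of `x` inside the block `B` "in increasing order": the smallest
element of `B` above `x` if one exists, otherwise the minimum of `B`.  The permutation
associated to a partition sends each `x` to `blockNext B x` where `B` is its block. -/
def blockNext {n : ℕ} (B : Finset (Fin n)) (x : Fin n) : Fin n :=
  if h : (B.filter fun y => x < y).Nonempty then (B.filter fun y => x < y).min' h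
  else if h' : B.Nonempty then B.min' h' else x

/-- The number of cycles of a permutation, including fixed points: the number of
equivalence classes of the `SameCycle` relation. -/
noncomputable def cycleCount {n : ℕ} (σ : Equiv.Perm (Fin n)) : ℕ :=
  Nat.card (Quotient (Equiv.Perm.SameCycle.setoid σ))

namespace Setoid

variable {α : Type*} [Finite α] {r s : Setoid α} {a b : α}

/-- `s` is `r` with the classes of `a` and `b` merged. -/
theorem card_quotient_eq_card_quotient_add_one (hrs : r ≤ s) (hsab : s a b) (hrab : ¬r a b)
    (hs : ∀ x y, s x y → r x y ∨ r a y ∨ r b y) :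
    Nat.card (Quotient r) = Nat.card (Quotient s) + 1 := by
  classical
  let f : {c : Quotient r // c ≠ Quotient.mk r b} → Quotient s :=
    fun c => Quotient.map' id hrs c.1
  have hf : Function.Bijective f := by
    constructor
    · rintro ⟨c, hc⟩ ⟨d, hd⟩ hcd
      induction c using Quotient.inductionOn with | h x => ?_
      induction d using Quotient.inductionOn with | h y => ?_
      have hxb : ¬r x b := fun h => hc (Quotient.sound h)
      have hyb : ¬r y b := fun h => hd (Quotient.sound h)
      have hxy : s x y := Quotient.exact hcd
      refine Subtype.ext (Quotient.sound ?_)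
      rcases hs x y hxy with h | hay | hby
      · exact h
      · rcases hs y x (s.symm hxy) with h | hax | hbx
        · exact r.symm h
        · exact r.trans (r.symm hax) hay
        · exact absurd (r.symm hbx) hxb
      · exact absurd (r.symm hby) hyb
    · intro c
      induction c using Quotient.inductionOn with | h x => ?_
      by_cases hxb : r x b
      · exact ⟨⟨Quotient.mk r a, fun h => hrab (Quotient.exact h)⟩,
          Quotient.sound (s.trans hsab (hrs (r.symm hxb)))⟩
      · exact ⟨⟨Quotient.mk r x, fun h => hxb (Quotient.exact h)⟩, rfl⟩
  have := Fintype.ofFinite (Quotient r)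
  rw [← Nat.card_eq_of_bijective f hf, Nat.card_eq_fintype_card, Nat.card_eq_fintype_card,
    Fintype.card_subtype_compl, Fintype.card_subtype_eq]
  have : 0 < Fintype.card (Quotient r) := Fintype.card_pos_iff.2 ⟨Quotient.mk r a⟩
  omega

end Setoid

namespace Equiv.Perm

section SameCycle

variable {α : Type*} {f : Perm α} {s : Set α} {a b x y : α}

theorem SameCycle.mem_of_mapsTo [Finite α] (hs : Set.MapsTo f s s) (h : f.SameCycle x y)
    (hx : x ∈ s) : y ∈ s := by
  obtain ⟨i, rfl⟩ := h.exists_nat_pow_eq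
  exact hs.perm_pow i hx

variable [DecidableEq α] [Finite α]

theorem SameCycle.of_swap_mul (h : (swap a b * f).SameCycle x y) :
    f.SameCycle x y ∨ f.SameCycle a y ∨ f.SameCycle b y := by
  refine h.mem_of_mapsTo (s := {z | f.SameCycle x z ∨ f.SameCycle a z ∨ f.SameCycle b z})
    (fun z hz => ?_) (Or.inl .rfl)
  have hz : f.SameCycle x z ∨ f.SameCycle a z ∨ f.SameCycle b z := hz
  show f.SameCycle x _ ∨ f.SameCycle a _ ∨ f.SameCycle b _
  rw [Perm.mul_apply, swap_apply_def]
  split_ifs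
  · exact Or.inr (Or.inr .rfl)
  · exact Or.inr (Or.inl .rfl)
  · simpa only [sameCycle_apply_right] using hz

theorem sameCycle_swap_mul_of_not_sameCycle (h : ¬f.SameCycle a b) :
    (swap a b * f).SameCycle a b := by
  -- on the `f`-cycle of `a`, `swap a b * f` agrees with `f` except at `f⁻¹ a`, sent to `b`
  have hreach : Set.MapsTo f {z | f.SameCycle a z → (swap a b * f).SameCycle a z}
      {z | f.SameCycle a z → (swap a b * f).SameCycle a z} := by
    intro z hz hfz
    have haz : f.SameCycle a z := sameCycle_apply_right.mp hfz
    by_cases hza : f z = a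
    · rw [hza]
    · have hzb : f z ≠ b := fun e => h (e ▸ hfz)
      simpa only [Perm.mul_apply, swap_apply_of_ne_of_ne hza hzb] using
        sameCycle_apply_right.mpr (hz haz)
  have hpred : f.SameCycle a (f⁻¹ a) := ⟨-1, by simp⟩
  have := sameCycle_apply_right.mpr (SameCycle.mem_of_mapsTo hreach hpred (fun _ => .rfl) hpred)
  simpa only [Perm.mul_apply, Perm.coe_inv, apply_symm_apply, swap_apply_left] using this

theorem not_sameCycle_swap_mul_of_sameCycle (hab : a ≠ b) (h : f.SameCycle a b) :
    ¬(swap a b * f).SameCycle a b := by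
  classical
  have hex : ∃ k, (f ^ k) a = b := h.exists_nat_pow_eq
  have hk : (f ^ Nat.find hex) a = b := Nat.find_spec hex
  have hmin : ∀ i < Nat.find hex, (f ^ i) a ≠ b := fun i hi => Nat.find_min hex hi
  have hk0 : 0 < Nat.find hex := Nat.pos_of_ne_zero fun h0 => hab (by simpa [h0] using hk)
  -- the arc `a, f a, …` stopping just before `b` is closed under `swap a b * f`
  have harc : Set.MapsTo (swap a b * f) {z | ∃ i < Nat.find hex, (f ^ i) a = z}
      {z | ∃ i < Nat.find hex, (f ^ i) a = z} := by
    rintro _ ⟨i, hi, rfl⟩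
    rw [Perm.mul_apply, ← Perm.mul_apply f, ← pow_succ']
    obtain hik | hik : i + 1 = Nat.find hex ∨ i + 1 < Nat.find hex := by omega
    · exact ⟨0, hk0, by rw [hik, hk, swap_apply_right, pow_zero, Perm.one_apply]⟩
    · refine ⟨i + 1, hik, (swap_apply_of_ne_of_ne (fun hfa => ?_) (hmin _ hik)).symm⟩
      apply hmin (Nat.find hex - (i + 1)) (by omega)
      calc (f ^ (Nat.find hex - (i + 1))) a
          = (f ^ (Nat.find hex - (i + 1))) ((f ^ (i + 1)) a) := by rw [hfa]
        _ = b := by rw [← Perm.mul_apply, ← pow_add, Nat.sub_add_cancel hik.le, hk]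
  intro hμ
  obtain ⟨i, hi, hib⟩ := hμ.mem_of_mapsTo harc ⟨0, hk0, rfl⟩
  exact hmin i hi hib

theorem SameCycle.of_swap_mul_of_sameCycle (h : (swap a b * f).SameCycle x y)
    (hab : f.SameCycle a b) : f.SameCycle x y := by
  have hy : f.SameCycle x y ∨ f.SameCycle a y := by
    rcases h.of_swap_mul with h' | h' | h'
    exacts [Or.inl h', Or.inr h', Or.inr (hab.trans h')]
  have hx : f.SameCycle y x ∨ f.SameCycle a x := by
    rcases h.symm.of_swap_mul with h' | h' | h'
    exacts [Or.inl h', Or.inr h', Or.inr (hab.trans h')]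
  rcases hy with hy | hy
  · exact hy
  rcases hx with hx | hx
  · exact hx.symm
  · exact hx.symm.trans hy

theorem SameCycle.swap_mul_of_sameCycle_swap_mul (h : f.SameCycle x y)
    (hab : (swap a b * f).SameCycle a b) : (swap a b * f).SameCycle x y := by
  refine h.mem_of_mapsTo (s := {z | (swap a b * f).SameCycle x z}) (fun z hz => ?_) .rfl
  have hz : (swap a b * f).SameCycle x (swap a b (f z)) := sameCycle_apply_right.mpr hz
  show (swap a b * f).SameCycle x (f z)
  rw [swap_apply_def] at hz
  split_ifs at hz with hza hzb
  · exact hza ▸ hz.trans hab.symm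
  · exact hzb ▸ hz.trans hab
  · exact hz

theorem SameCycle.swap_mul (h : f.SameCycle x y) (ha : ¬f.SameCycle x a)
    (hb : ¬f.SameCycle x b) : (swap a b * f).SameCycle x y := by
  have hya : ¬f.SameCycle a y := fun e => ha (h.trans e.symm)
  have hyb : ¬f.SameCycle b y := fun e => hb (h.trans e.symm)
  rw [← swap_mul_self_mul a b f] at h
  rcases h.of_swap_mul with h' | h' | h'
  · exact h'
  · rcases h'.of_swap_mul with h'' | h'' | h'' <;> contradiction
  · rcases h'.of_swap_mul with h'' | h'' | h'' <;> contradiction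

theorem SameCycle.swap_mul_of_apply_eq_self (h : f.SameCycle x y) (ha : (swap a b * f) a = a)
    (hx : x ≠ a) (hy : y ≠ a) : (swap a b * f).SameCycle x y := by
  have hfix : ∀ {z}, (swap a b * f).SameCycle a z → z = a := fun hz => (hz.eq_of_left ha).symm
  rw [← swap_mul_self_mul a b f] at h
  rcases h.of_swap_mul with h' | h' | h'
  · exact h'
  · exact absurd (hfix h') hy
  rcases h.symm.of_swap_mul with h'' | h'' | h''
  · exact h''.symm
  · exact absurd (hfix h'') hx
  · exact h''.symm.trans h'

end SameCycle

section CycleCount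

variable {n : ℕ} {σ : Perm (Fin n)} {a b : Fin n}

theorem cycleCount_le (σ : Perm (Fin n)) : cycleCount σ ≤ n := by
  simpa [cycleCount] using
    Nat.card_le_card_of_surjective _ (Quotient.mk_surjective (s := SameCycle.setoid σ))

theorem cycleCount_one : cycleCount (1 : Perm (Fin n)) = n := by
  have hinj : Function.Injective (Quotient.mk (SameCycle.setoid (1 : Perm (Fin n)))) :=
    fun _ _ h => sameCycle_one.mp (Quotient.exact h)
  simpa [cycleCount] using (Nat.card_eq_of_bijective _ ⟨hinj, Quotient.mk_surjective⟩).symm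

theorem sameCycle_finRotate (x y : Fin n) : (finRotate n).SameCycle x y := by
  rcases lt_or_ge n 2 with hn | hn
  · rw [Fin.subsingleton_iff_le_one.mpr (by omega) |>.elim x y]
  · have hsupp : ∀ z, finRotate n z ≠ z := fun z =>
      mem_support.mp (by simp [support_finRotate_of_le hn])
    exact (isCycle_finRotate_of_le hn).sameCycle (hsupp x) (hsupp y)

theorem cycleCount_finRotate (hn : 0 < n) : cycleCount (finRotate n) = 1 := by
  refine Nat.card_eq_one_iff_unique.mpr ⟨⟨fun c d => ?_⟩, ⟨Quotient.mk _ ⟨0, hn⟩⟩⟩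
  induction c, d using Quotient.inductionOn₂ with
  | h x y => exact Quotient.sound (sameCycle_finRotate x y)

theorem cycleCount_eq_cycleCount_swap_mul_add_one (h : ¬σ.SameCycle a b) :
    cycleCount σ = cycleCount (swap a b * σ) + 1 :=
  Setoid.card_quotient_eq_card_quotient_add_one
    (fun _ _ hxy => hxy.swap_mul_of_sameCycle_swap_mul (sameCycle_swap_mul_of_not_sameCycle h))
    (sameCycle_swap_mul_of_not_sameCycle h) h fun _ _ hxy => hxy.of_swap_mul

theorem cycleCount_swap_mul_of_sameCycle (hab : a ≠ b) (h : σ.SameCycle a b) :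
    cycleCount (swap a b * σ) = cycleCount σ + 1 := by
  simpa only [swap_mul_self_mul] using
    cycleCount_eq_cycleCount_swap_mul_add_one (not_sameCycle_swap_mul_of_sameCycle hab h)

theorem cycleCount_swap_mul_le (a b : Fin n) (σ : Perm (Fin n)) :
    cycleCount (swap a b * σ) ≤ cycleCount σ + 1 := by
  rcases eq_or_ne a b with rfl | hab
  · rw [swap_self, ← Perm.one_def, one_mul]
    omega
  by_cases h : σ.SameCycle a b
  · exact (cycleCount_swap_mul_of_sameCycle hab h).le
  · rw [cycleCount_eq_cycleCount_swap_mul_add_one h]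
    omega

theorem cycleCount_induction {P : Perm (Fin n) → Prop}
    (ih : ∀ σ, (∀ τ, cycleCount σ < cycleCount τ → P τ) → P σ) (σ : Perm (Fin n)) : P σ :=
  (InvImage.wf (fun σ => n - cycleCount σ) wellFounded_lt).induction σ fun σ h =>
    ih σ fun τ hτ => h τ (by have := cycleCount_le τ; simp only [InvImage]; omega)

theorem cycleCount_add_cycleCount_le (σ τ : Perm (Fin n)) :
    cycleCount σ + cycleCount τ ≤ n + cycleCount (σ * τ) := by
  induction σ using cycleCount_induction generalizing τ with
  | ih σ ih =>
  rcases eq_or_ne σ 1 with rfl | hσ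
  · rw [cycleCount_one, one_mul]
  obtain ⟨x, hx⟩ : ∃ x, σ x ≠ x := not_forall.mp fun h => hσ (Perm.ext h)
  have hsplit := cycleCount_swap_mul_of_sameCycle (Ne.symm hx) (sameCycle_apply_right.mpr .rfl)
  have hτ := ih (swap x (σ x) * σ) (by omega) τ
  have hmerge := cycleCount_swap_mul_le x (σ x) (σ * τ)
  rw [mul_assoc] at hτ
  omega

end CycleCount

theorem exists_lt_apply_of_ne_one {α : Type*} [LinearOrder α] [Fintype α] {σ : Perm α}
    (hσ : σ ≠ 1) : ∃ p, p < σ p := by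
  classical
  have hne : σ.support.Nonempty := nonempty_iff_ne_empty.mpr (support_eq_empty_iff.not.mpr hσ)
  have hmin := min'_mem _ hne
  exact ⟨_, lt_of_le_of_ne (min'_le _ _ (apply_mem_support.mpr hmin)) (mem_support.mp hmin).symm⟩

theorem val_finRotate_of_lt {n : ℕ} {r q : Fin n} (h : r < q) :
    (finRotate n r : ℕ) = r + 1 := by
  obtain ⟨m, rfl⟩ : ∃ m, n = m + 1 := ⟨n - 1, by have := q.pos; omega⟩
  exact coe_finRotate_of_ne_last (h.trans_le (Fin.le_last q)).ne

theorem not_sameCycle_mul_finRotate {n : ℕ} {π : Perm (Fin n)} {p q x y : Fin n} (hq : π q = p)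
    (hmid : ∀ r, p < r → r < q → π r ∈ Set.Ico p q) (hx : x ∈ Set.Ico p q)
    (hy : y ∉ Set.Ico p q) : ¬(π * finRotate n).SameCycle x y := by
  refine fun h => hy (h.mem_of_mapsTo (fun r ⟨hpr, hrq⟩ => ?_) hx)
  have hv := val_finRotate_of_lt hrq
  rw [Perm.mul_apply]
  rcases eq_or_ne (finRotate n r) q with hr | hr
  · rw [hr, hq]
    exact ⟨le_rfl, hpr.trans_lt hrq⟩
  · exact hmid _ (by omega) (lt_of_le_of_ne (by omega) hr)

section Noncrossing

variable {n : ℕ} {σ : Perm (Fin n)}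

def IsNoncrossing (σ : Perm (Fin n)) : Prop :=
  ∀ a b c d : Fin n, a < b → b < c → c < d →
    σ.SameCycle a c → σ.SameCycle b d → σ.SameCycle a b

/-- The part of "the cycles of `σ` are traversed in increasing order" that the argument uses. -/
def SkipsNoCyclePoint (σ : Perm (Fin n)) : Prop :=
  ∀ x y : Fin n, x < y → y < σ x → ¬σ.SameCycle x y

theorem IsNoncrossing.inv_apply_mem_Ico (hnc : σ.IsNoncrossing) (hskip : σ.SkipsNoCyclePoint)
    {p r : Fin n} (hpr : p < r) (hrq : r < σ p) : σ⁻¹ r ∈ Set.Ico p (σ p) := by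
  have hpr' := hskip p r hpr hrq
  have hsr : σ.SameCycle (σ⁻¹ r) r := ⟨1, by simp⟩
  have hsq : σ.SameCycle p (σ p) := sameCycle_apply_right.mpr .rfl
  refine ⟨not_lt.mp fun hsp => hpr' ?_, lt_of_le_of_ne (not_lt.mp fun hqs => hpr' ?_) ?_⟩
  · exact (hnc _ _ _ _ hsp hpr hrq hsr hsq).symm.trans hsr
  · exact hnc _ _ _ _ hpr hrq hqs hsq hsr.symm
  · intro hsq'
    exact hpr' (hsq.trans (hsq' ▸ hsr))

theorem IsNoncrossing.swap_mul (hnc : σ.IsNoncrossing) (q : Fin n) :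
    (swap q (σ q) * σ).IsNoncrossing := by
  have hfix : (swap q (σ q) * σ) q = q := by rw [Perm.mul_apply, swap_apply_right]
  have hne : ∀ {x y}, (swap q (σ q) * σ).SameCycle x y → x < y → x ≠ q := fun hxy hlt hxq =>
    hlt.ne (hxy.eq_of_left (hxq ▸ hfix))
  have hcoarse : ∀ {x y}, (swap q (σ q) * σ).SameCycle x y → σ.SameCycle x y := fun hxy =>
    hxy.of_swap_mul_of_sameCycle (sameCycle_apply_right.mpr .rfl)
  intro a b c d hab hbc hcd hac hbd
  exact (hnc a b c d hab hbc hcd (hcoarse hac) (hcoarse hbd)).swap_mul_of_apply_eq_self hfix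
    (hne hac (hab.trans hbc)) (hne hbd (hbc.trans hcd))

theorem SkipsNoCyclePoint.swap_mul (hskip : σ.SkipsNoCyclePoint) {p : Fin n} (hp : p < σ p) :
    (swap (σ p) (σ (σ p)) * σ).SkipsNoCyclePoint := by
  intro x y hxy hyx hsc
  have hpq : σ.SameCycle p (σ p) := sameCycle_apply_right.mpr .rfl
  have hcoarse : σ.SameCycle x y := hsc.of_swap_mul_of_sameCycle (sameCycle_apply_right.mpr .rfl)
  rcases eq_or_ne x p with rfl | hxp
  · rw [Perm.mul_apply, swap_apply_left] at hyx
    have hyq : y ≠ σ x := by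
      rintro rfl
      exact hp.ne (hsc.eq_of_right (by rw [Function.IsFixedPt, Perm.mul_apply, swap_apply_right]))
    exact hskip _ y (lt_of_le_of_ne (not_lt.mp fun h => hskip x y hxy h hcoarse) hyq.symm) hyx
      (hpq.symm.trans hcoarse)
  rcases eq_or_ne x (σ p) with rfl | hxq
  · rw [Perm.mul_apply, swap_apply_right] at hyx
    exact hxy.not_gt hyx
  · rw [Perm.mul_apply, swap_apply_of_ne_of_ne (σ.injective.ne hxp) (σ.injective.ne hxq)] at hyx
    exact hskip x y hxy hyx hcoarse

theorem cycleCount_add_cycleCount_of_isNoncrossing (hn : 0 < n) (hskip : σ.SkipsNoCyclePoint)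
    (hnc : σ.IsNoncrossing) : cycleCount σ + cycleCount (σ⁻¹ * finRotate n) = n + 1 := by
  induction σ using cycleCount_induction with
  | ih σ ih =>
  rcases eq_or_ne σ 1 with rfl | hσ
  · rw [cycleCount_one, inv_one, one_mul, cycleCount_finRotate hn]
  obtain ⟨p, hp⟩ := exists_lt_apply_of_ne_one hσ
  have hsplit := cycleCount_swap_mul_of_sameCycle (σ.injective.ne hp.ne').symm
    (sameCycle_apply_right.mpr (SameCycle.refl σ (σ p)))
  -- `[p, σ p)` is a union of cycles of `σ⁻¹ * finRotate n`, so removing `σ p` from its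
  -- `σ`-cycle merges two cycles of `σ⁻¹ * finRotate n`
  have hmerge := cycleCount_eq_cycleCount_swap_mul_add_one
    (not_sameCycle_mul_finRotate (π := σ⁻¹) (x := p) (y := σ p) (σ.symm_apply_apply p)
      (fun _ => hnc.inv_apply_mem_Ico hskip) ⟨le_rfl, hp⟩ fun h => lt_irrefl _ h.2)
  have hkrew : (swap (σ p) (σ (σ p)) * σ)⁻¹ * finRotate n =
      swap p (σ p) * (σ⁻¹ * finRotate n) := by
    rw [swap_apply_apply, inv_mul_cancel_right, mul_inv_rev, swap_inv, mul_assoc]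
  have := ih _ (by omega) (hskip.swap_mul hp) (hnc.swap_mul _)
  rw [hkrew] at this
  omega

theorem isNoncrossing_of_cycleCount_add_eq
    (h : cycleCount σ + cycleCount (σ⁻¹ * finRotate n) = n + 1) : σ.IsNoncrossing := by
  intro a b c d hab hbc hcd hac hbd
  by_contra hnab
  have hsplit₁ := cycleCount_swap_mul_of_sameCycle (hab.trans hbc).ne hac
  have hsplit₂ := cycleCount_swap_mul_of_sameCycle (hbc.trans hcd).ne
    (hbd.swap_mul (fun e => hnab e.symm) fun e => hnab (hac.trans e.symm))
  have htri := cycleCount_add_cycleCount_le (swap b d * (swap a c * σ)) (σ⁻¹ * finRotate n)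
  rw [show swap b d * (swap a c * σ) * (σ⁻¹ * finRotate n) = swap b d * (swap a c * finRotate n)
    by group] at htri
  have hγ := cycleCount_swap_mul_of_sameCycle (hab.trans hbc).ne (sameCycle_finRotate a c)
  rw [cycleCount_finRotate a.pos] at hγ
  have hγ' := cycleCount_eq_cycleCount_swap_mul_add_one
    (not_sameCycle_mul_finRotate (π := swap a c) (swap_apply_right a c)
      (fun r har hrc => by rw [swap_apply_of_ne_of_ne har.ne' hrc.ne]; exact ⟨har.le, hrc⟩)
      ⟨hab.le, hbc⟩ fun hd => lt_asymm hcd hd.2)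
  omega

end Noncrossing

end Equiv.Perm

section Partition

variable {n : ℕ} {π : Finpartition (univ : Finset (Fin n))} {σ : Perm (Fin n)}

theorem blockNext_mem {B : Finset (Fin n)} (hB : B.Nonempty) (x : Fin n) : blockNext B x ∈ B := by
  unfold blockNext
  split_ifs with h
  · exact (mem_filter.mp (min'_mem _ h)).1
  · exact min'_mem _ hB

theorem blockNext_le {B : Finset (Fin n)} {x y : Fin n} (hy : y ∈ B) (hxy : x < y) :
    blockNext B x ≤ y := by
  rw [blockNext, dif_pos ⟨y, mem_filter.mpr ⟨hy, hxy⟩⟩]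
  exact min'_le _ _ (mem_filter.mpr ⟨hy, hxy⟩)

theorem blockNext_eq_of_forall_le {B : Finset (Fin n)} {x y : Fin n} (hy : y ∈ B) (hxy : x < y)
    (hnext : ∀ z ∈ B, x < z → y ≤ z) : blockNext B x = y := by
  rw [blockNext, dif_pos ⟨y, mem_filter.mpr ⟨hy, hxy⟩⟩]
  exact (min'_eq_iff _ _ _).mpr
    ⟨mem_filter.mpr ⟨hy, hxy⟩, fun z hz => hnext z (mem_filter.mp hz).1 (mem_filter.mp hz).2⟩

theorem sameCycle_iff_mem_part (hσ : ∀ x, σ x = blockNext (π.part x) x) {x y : Fin n} :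
    σ.SameCycle x y ↔ y ∈ π.part x := by
  have hself : ∀ z, z ∈ π.part z := fun z => π.mem_part (mem_univ z)
  have hpart : ∀ {z}, z ∈ π.part x → π.part z = π.part x := fun hz =>
    π.part_eq_of_mem (π.part_mem.2 (mem_univ x)) hz
  constructor
  · refine fun h => h.mem_of_mapsTo (fun z hz => ?_) (hself x)
    rw [mem_coe] at hz ⊢
    rw [hσ z, hpart hz]
    exact blockNext_mem ⟨x, hself x⟩ z
  · have hB : (π.part x).Nonempty := ⟨x, hself x⟩
    -- every point of the block is reached from its minimum by walking through predecessors
    have hmin : ∀ y ∈ π.part x, σ.SameCycle ((π.part x).min' hB) y := by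
      intro y
      induction y using WellFoundedLT.induction with
      | _ y ih =>
      intro hy
      rcases eq_or_ne y ((π.part x).min' hB) with rfl | hne
      · exact .rfl
      have hlow : ((π.part x).filter (· < y)).Nonempty :=
        ⟨_, mem_filter.mpr ⟨min'_mem _ hB, lt_of_le_of_ne (min'_le _ _ hy) hne.symm⟩⟩
      set m := ((π.part x).filter (· < y)).max' hlow
      obtain ⟨hmB, hmy⟩ := mem_filter.mp (max'_mem _ hlow)
      have hσm : σ m = y := by
        rw [hσ, hpart hmB]
        refine blockNext_eq_of_forall_le hy hmy fun z hz hmz => not_lt.mp fun hzy => ?_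
        exact hmz.not_ge (le_max' _ z (mem_filter.mpr ⟨hz, hzy⟩))
      have hstep : σ.SameCycle m (σ m) := Perm.sameCycle_apply_right.mpr .rfl
      rw [hσm] at hstep
      exact (ih m hmy hmB).trans hstep
    exact fun hy => (hmin x (hself x)).symm.trans (hmin y hy)

theorem isNonCrossing_iff_isNoncrossing (hσ : ∀ x, σ x = blockNext (π.part x) x) :
    π.IsNonCrossing ↔ σ.IsNoncrossing := by
  have hpart : ∀ x, π.part x ∈ π.parts := fun x => π.part_mem.2 (mem_univ x)
  have hself : ∀ x, x ∈ π.part x := fun x => π.mem_part (mem_univ x)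
  simp only [Finpartition.IsNonCrossing, Perm.IsNoncrossing, sameCycle_iff_mem_part hσ]
  refine forall₄_congr fun a b c d => imp_congr_right fun _ => imp_congr_right fun _ =>
    imp_congr_right fun _ => ⟨fun h hc hd => ?_, fun h B₁ hB₁ B₂ hB₂ ha hc hb hd => ?_⟩
  · rw [h _ (hpart a) _ (hpart b) (hself a) hc (hself b) hd]
    exact hself b
  · obtain rfl := π.part_eq_of_mem hB₁ ha
    obtain rfl := π.part_eq_of_mem hB₂ hb
    exact (π.part_eq_of_mem (hpart a) (h hc hd)).symm

theorem skipsNoCyclePoint_of_blockNext (hσ : ∀ x, σ x = blockNext (π.part x) x) :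
    σ.SkipsNoCyclePoint := fun x _ hxy hyx hsc =>
  hyx.not_ge ((hσ x).trans_le (blockNext_le ((sameCycle_iff_mem_part hσ).mp hsc) hxy))

end Partition

/-- A set partition `π` of `{1,…,n}`, viewed as the permutation `σ` whose cycles are
the blocks of `π` written in increasing order, is non-crossing if and only if
`|π| + |π⁻¹ γ_n| = n + 1`, where `γ_n = (1,2,…,n)` is the full cycle (`finRotate n`)
and `|·|` counts cycles (including fixed points). -/
theorem noncrossing_iff_cycle_count (n : ℕ) (hn : 0 < n)
    (π : Finpartition (Finset.univ : Finset (Fin n)))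
    (σ : Equiv.Perm (Fin n)) (hσ : ∀ x : Fin n, σ x = blockNext (π.part x) x) :
    π.IsNonCrossing ↔
      cycleCount σ + cycleCount (σ⁻¹ * finRotate n) = n + 1 := by
  rw [isNonCrossing_iff_isNoncrossing hσ]
  exact ⟨Perm.cycleCount_add_cycleCount_of_isNoncrossing hn (skipsNoCyclePoint_of_blockNext hσ),
    Perm.isNoncrossing_of_cycleCount_add_eq⟩
end

section
/- Let G(z) = 1/z + 1/z² = (z+1)/z² be the formal 'Cauchy transform' with moment sequence m₁ = 1, m_n = 0 for n ≥ 2. Then its compositional inverse is K(z) = (1 + √(1+4z))/(2z), the H-transform H = G'/G − G''/(2G') equals −1/(z(z+1)(z+2)), and the series R̂(z) = −H(K(z))·K'(z) equals −4z/(1 + 4z + √(1+4z))², whose n-th Taylor coefficient (coefficient of z^{n−1}) is (−1)ⁿ(4ⁿ − C(2n+1, n)). -/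
/-!
Everything is rational in `s = √(1 + 4z)`: substituting `z = (s² - 1)/4` gives `K(z) = 2/(s - 1)`,
which turns (i)–(iii) into identities between rational functions of `s`. For (iv), the left-hand
side equals `1/(1 + 4z) - (1/s - 1)/(-2z)`. The first term is a geometric series; the second is
`∑ C(2n+1, n) (-z)ⁿ`, which follows from the binomial series `(1 - 4x)^(-1/2) = ∑ C(2n, n) xⁿ`
and `C(2n+2, n+1) = 2 C(2n+1, n)`.
-/

/-- `G(z) = 1/z + 1/z² = (z+1)/z²`, the formal "Cauchy transform" with moment
sequence `m₁ = 1`, `m_n = 0` for `n ≥ 2`. -/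
noncomputable def Ginv : ℝ → ℝ := fun z => (z + 1) / z ^ 2

/-- The compositional inverse `K(z) = (1 + √(1+4z))/(2z)` of `Ginv`. -/
noncomputable def Kinv : ℝ → ℝ := fun z => (1 + Real.sqrt (1 + 4 * z)) / (2 * z)

/-- The `H`-transform of `Ginv`: `H(z) = −1/(z(z+1)(z+2))`. -/
noncomputable def Hinv : ℝ → ℝ := fun z => -1 / (z * (z + 1) * (z + 2))

open Real

lemma exists_eq_sq_sub_one_div_four {z : ℝ} (hz : 0 < 1 + 4 * z) :
    ∃ s, 0 < s ∧ z = (s ^ 2 - 1) / 4 :=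
  ⟨√(1 + 4 * z), sqrt_pos.mpr hz, by rw [sq_sqrt hz.le]; ring⟩

lemma one_add_four_mul_sq_sub_one_div_four (s : ℝ) : 1 + 4 * ((s ^ 2 - 1) / 4) = s ^ 2 := by
  ring

lemma Kinv_sq_sub_one_div_four {s : ℝ} (hs : 0 ≤ s) (hs1 : s ≠ 1) :
    Kinv ((s ^ 2 - 1) / 4) = 2 / (s - 1) := by
  have : s ^ 2 - 1 ≠ 0 := by contrapose! hs1; nlinarith
  rw [Kinv, one_add_four_mul_sq_sub_one_div_four, sqrt_sq hs]
  field_simp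
  ring

section CentralBinomialSeries

open Nat

lemma ascPochhammer_eval_one_half (n : ℕ) :
    (ascPochhammer ℝ n).eval (1 / 2) = (centralBinom n : ℝ) * n ! / 4 ^ n := by
  induction n with
  | zero => simp
  | succ n ih =>
    have h : ((n + 1 : ℕ) : ℝ) * centralBinom (n + 1) = 2 * (2 * n + 1) * centralBinom n := by
      exact_mod_cast succ_mul_centralBinom_succ n
    rw [ascPochhammer_succ_eval, ih, factorial_succ, pow_succ]
    push_cast at h ⊢
    rw [div_mul_eq_mul_div, div_eq_div_iff (by positivity) (by positivity)]
    linear_combination (-4 ^ n * (n ! : ℝ)) * h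

/-- The coefficient of `xⁿ` in the binomial series of `(1 - x)^(-1/2)`. -/
lemma Ring.choose_one_half_add_sub_one (n : ℕ) :
    Ring.choose ((1 / 2 : ℝ) + n - 1) n = centralBinom n / 4 ^ n := by
  have h := Ring.factorial_nsmul_multichoose_eq_ascPochhammer (1 / 2 : ℝ) n
  rw [Polynomial.ascPochhammer_smeval_eq_eval, ascPochhammer_eval_one_half, nsmul_eq_mul,
    Ring.multichoose_eq] at h
  have hn : (n ! : ℝ) ≠ 0 := by positivity
  field_simp at h ⊢
  linear_combination h

theorem hasSum_centralBinom_mul_pow {x : ℝ} (hx : |x| < 1 / 4) :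
    HasSum (fun n ↦ (centralBinom n : ℝ) * x ^ n) (√(1 - 4 * x))⁻¹ := by
  have hball : 4 * x ∈ Metric.eball (0 : ℝ) 1 := by
    rw [mem_eball_zero_iff, ← ofReal_norm, ENNReal.ofReal_lt_one, Real.norm_eq_abs, abs_mul]
    norm_num
    linarith
  have h := (one_div_one_sub_rpow_hasFPowerSeriesOnBall_zero (1 / 2)).hasSum hball
  simp only [FormalMultilinearSeries.ofScalars_apply_eq, Ring.choose_one_half_add_sub_one,
    zero_add, smul_eq_mul, mul_pow] at h
  rw [sqrt_eq_rpow, ← one_div]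
  exact h.congr_fun fun n ↦ by field_simp

theorem hasSum_choose_two_mul_add_one_mul_pow {x : ℝ} (hx₀ : x ≠ 0) (hx : |x| < 1 / 4) :
    HasSum (fun n ↦ ((2 * n + 1).choose n : ℝ) * x ^ n) (((√(1 - 4 * x))⁻¹ - 1) / (2 * x)) := by
  have h := ((hasSum_nat_add_iff' 1).mpr (hasSum_centralBinom_mul_pow hx)).div_const (2 * x)
  rw [Finset.sum_range_one, centralBinom_zero, cast_one, pow_zero, mul_one] at h
  refine h.congr_fun fun n ↦ ?_
  have hc : centralBinom (n + 1) = 2 * (2 * n + 1).choose n := by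
    rw [centralBinom_eq_two_mul_choose, mul_add_one, choose_succ_succ, choose_symm_half]
    ring
  rw [hc, pow_succ]
  push_cast
  field_simp

end CentralBinomialSeries

lemma Ginv_Kinv {z : ℝ} (hz : z ≠ 0) (hz4 : 0 < 1 + 4 * z) : Ginv (Kinv z) = z := by
  obtain ⟨s, hs, rfl⟩ := exists_eq_sq_sub_one_div_four hz4
  have hs1 : s ≠ 1 := by rintro rfl; simp at hz
  have : s - 1 ≠ 0 := sub_ne_zero.mpr hs1
  rw [Kinv_sq_sub_one_div_four hs.le hs1, Ginv]
  field_simp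
  ring

lemma hasDerivAt_Ginv {z : ℝ} (hz : z ≠ 0) : HasDerivAt Ginv (-(z + 2) / z ^ 3) z := by
  have h := ((hasDerivAt_id' z).add_const 1).div (hasDerivAt_pow 2 z) (pow_ne_zero 2 hz)
  refine h.congr_deriv ?_
  field_simp
  ring

lemma deriv_deriv_Ginv {z : ℝ} (hz : z ≠ 0) : deriv (deriv Ginv) z = (2 * z + 6) / z ^ 4 := by
  have hderiv : deriv Ginv =ᶠ[nhds z] fun w ↦ -(w + 2) / w ^ 3 := by
    filter_upwards [isOpen_ne.mem_nhds hz] with w hw using (hasDerivAt_Ginv hw).deriv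
  have h : HasDerivAt (fun w ↦ -(w + 2) / w ^ 3) ((2 * z + 6) / z ^ 4) z := by
    have hnum : HasDerivAt (fun w : ℝ ↦ -(w + 2)) (-1) z := ((hasDerivAt_id' z).add_const 2).neg
    refine (hnum.div (hasDerivAt_pow 3 z) (pow_ne_zero 3 hz)).congr_deriv ?_
    field_simp
    ring
  rw [hderiv.deriv_eq, h.deriv]

noncomputable def hTransform (G : ℝ → ℝ) (z : ℝ) : ℝ :=
  deriv G z / G z - deriv (deriv G) z / (2 * deriv G z)

lemma hTransform_Ginv {z : ℝ} (hz : z ≠ 0) (hz1 : z + 1 ≠ 0) (hz2 : z + 2 ≠ 0) :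
    hTransform Ginv z = Hinv z := by
  rw [hTransform, (hasDerivAt_Ginv hz).deriv, deriv_deriv_Ginv hz, Ginv, Hinv]
  field_simp
  ring

lemma hasDerivAt_Kinv {z : ℝ} (hz : z ≠ 0) (hz4 : 0 < 1 + 4 * z) :
    HasDerivAt Kinv (-Kinv z ^ 2 / √(1 + 4 * z)) z := by
  have hsqrt := (((hasDerivAt_id' z).const_mul 4).const_add 1).sqrt hz4.ne'
  have h := (hsqrt.const_add 1).div ((hasDerivAt_id' z).const_mul 2) (mul_ne_zero two_ne_zero hz)
  refine h.congr_deriv ?_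
  obtain ⟨s, hs, rfl⟩ := exists_eq_sq_sub_one_div_four hz4
  have hs1 : s ≠ 1 := by rintro rfl; simp at hz
  have : s - 1 ≠ 0 := sub_ne_zero.mpr hs1
  have : s ^ 2 - 1 ≠ 0 := (div_ne_zero_iff.mp hz).1
  rw [Kinv_sq_sub_one_div_four hs.le hs1,
    one_add_four_mul_sq_sub_one_div_four, sqrt_sq hs.le]
  field_simp
  ring

lemma neg_Hinv_Kinv_mul_deriv_Kinv {z : ℝ} (hz : 0 < z) :
    -(Hinv (Kinv z)) * deriv Kinv z = -4 * z / (1 + 4 * z + √(1 + 4 * z)) ^ 2 := by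
  have hz4 : 0 < 1 + 4 * z := by positivity
  rw [(hasDerivAt_Kinv hz.ne' hz4).deriv]
  obtain ⟨s, hs, rfl⟩ := exists_eq_sq_sub_one_div_four hz4
  have hs1 : 0 < s - 1 := by nlinarith
  rw [Kinv_sq_sub_one_div_four hs.le (by linarith), Hinv,
    one_add_four_mul_sq_sub_one_div_four, sqrt_sq hs.le]
  have : s + 1 ≠ 0 := by positivity
  field_simp
  ring

theorem hasSum_neg_one_pow_mul_four_pow_sub_choose {z : ℝ} (hz₀ : z ≠ 0) (hz : |z| < 1 / 4) :
    HasSum (fun n ↦ (-1 : ℝ) ^ n * ((4 : ℝ) ^ n - ((2 * n + 1).choose n : ℝ)) * z ^ n)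
      (-4 * z / (1 + 4 * z + √(1 + 4 * z)) ^ 2) := by
  have hgeom := hasSum_geometric_of_abs_lt_one (r := -(4 * z))
    (by rw [abs_neg, abs_mul]; norm_num; linarith)
  have hchoose := hasSum_choose_two_mul_add_one_mul_pow (neg_ne_zero.mpr hz₀) (by rwa [abs_neg])
  have hsum : -4 * z / (1 + 4 * z + √(1 + 4 * z)) ^ 2
      = (1 - -(4 * z))⁻¹ - ((√(1 - 4 * -z))⁻¹ - 1) / (2 * -z) := by
    obtain ⟨s, hs, rfl⟩ := exists_eq_sq_sub_one_div_four (z := z) (by linarith [neg_abs_le z])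
    have : s ^ 2 - 1 ≠ 0 := (div_ne_zero_iff.mp hz₀).1
    rw [mul_neg, sub_neg_eq_add, one_add_four_mul_sq_sub_one_div_four, sqrt_sq hs.le]
    field_simp
    ring
  rw [hsum]
  exact (hgeom.sub hchoose).congr_fun fun n ↦ by rw [neg_pow (4 * z), neg_pow z, mul_pow]; ring

/-- Example 5.14 (inverse of Laguerre polynomials): for `G(z) = (z+1)/z²`:
(i) its compositional inverse is `K(z) = (1+√(1+4z))/(2z)`;
(ii) the `H`-transform `G'/G − G''/(2G')` equals `−1/(z(z+1)(z+2))`;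
(iii) `R̂(z) = −H(K(z))·K'(z)` equals `−4z/(1 + 4z + √(1+4z))²`;
(iv) the Taylor expansion `−4z/(1+4z+√(1+4z))² = ∑_n (−1)ⁿ(4ⁿ − C(2n+1,n)) zⁿ`
holds (on `0 < z < 1/4`). -/
theorem inverse_laguerre_fluctuations :
    (∀ z : ℝ, 0 < z → Ginv (Kinv z) = z) ∧
    (∀ z : ℝ, 0 < z →
      deriv Ginv z / Ginv z - deriv (deriv Ginv) z / (2 * deriv Ginv z) = Hinv z) ∧
    (∀ z : ℝ, 0 < z →
      -(Hinv (Kinv z)) * deriv Kinv z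
        = -4 * z / (1 + 4 * z + Real.sqrt (1 + 4 * z)) ^ 2) ∧
    (∀ z : ℝ, 0 < z → z < 1 / 4 →
      -4 * z / (1 + 4 * z + Real.sqrt (1 + 4 * z)) ^ 2
        = ∑' n : ℕ, (-1 : ℝ) ^ n * ((4 : ℝ) ^ n - (Nat.choose (2 * n + 1) n : ℝ)) * z ^ n) :=
  ⟨fun z hz ↦ Ginv_Kinv hz.ne' (by positivity),
    fun z hz ↦ hTransform_Ginv hz.ne' (by positivity) (by positivity),
    fun z hz ↦ neg_Hinv_Kinv_mul_deriv_Kinv hz,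
    fun z hz hz4 ↦ (hasSum_neg_one_pow_mul_four_pow_sub_choose hz.ne'
      (by rwa [abs_of_pos hz])).tsum_eq.symm⟩
end
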